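/- arXiv:2010.15564 — 6 statements merged into one kernel-verified Lean document; each statement's English description precedes it below -/
import Mathlib

section
/- In the data setting, the data (U₋, X, Y₋) are informative for controllability (i.e., rank [A − λI, B] = n for every A ∈ 𝒜_dat and every λ ∈ ℂ) if and only if ker M ⊆ im B and rank [R − λMX₋, MB] = rank M for all λ ∈ ℂ. The data are informative for stabilizability (the same with λ restricted to |λ| ≥ 1) if and only if ker M ⊆ im B and rank [R − λMX₋, MB] = rank M for all λ ∈ ℂ with |λ| ≥ 1. -/
open Matrix

/-- Complexification of a real matrix. -/
noncomputable def cx {a b : ℕ} (M : Matrix (Fin a) (Fin b) ℝ) : Matrix (Fin a) (Fin b) ℂ :=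
  M.map (algebraMap ℝ ℂ)

/-- First T columns of the state data matrix X. -/
def Xminus {n T : ℕ} (X : Matrix (Fin n) (Fin (T + 1)) ℝ) : Matrix (Fin n) (Fin T) ℝ :=
  Matrix.of fun i t => X i t.castSucc

/-- Last T columns of the state data matrix X. -/
def Xplus {n T : ℕ} (X : Matrix (Fin n) (Fin (T + 1)) ℝ) : Matrix (Fin n) (Fin T) ℝ :=
  Matrix.of fun i t => X i t.succ

/-- The set of state matrices A consistent with the noisy data (U₋, X, Y₋). -/
def Adat {n m p q T : ℕ} (B : Matrix (Fin n) (Fin m) ℝ) (C : Matrix (Fin p) (Fin n) ℝ)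
    (D : Matrix (Fin p) (Fin m) ℝ) (E : Matrix (Fin n) (Fin q) ℝ)
    (F : Matrix (Fin p) (Fin q) ℝ) (U : Matrix (Fin m) (Fin T) ℝ)
    (X : Matrix (Fin n) (Fin (T + 1)) ℝ) (Y : Matrix (Fin p) (Fin T) ℝ) :
    Set (Matrix (Fin n) (Fin n) ℝ) :=
  {A | ∃ W : Matrix (Fin q) (Fin T) ℝ,
    Xplus X = A * Xminus X + B * U + E * W ∧ Y = C * Xminus X + D * U + F * W}

/-!
Both equivalences are instances of one statement for an eigenvalue region `Λ ⊆ ℂ` containing a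
real number (`Λ = ℂ`, resp. `Λ = {|λ| ≥ 1}`).

Since `ker [M N] = im [E; F]`, a matrix `A` lies in `𝒜_dat` iff `M A X₋ = R`, so
`𝒜_dat = A₀ + {Δ | M Δ X₋ = 0}`, and `[R − λ M X₋, M B] = M [(A − λ I) X₋, B]` for `A ∈ 𝒜_dat`.

If `ker M ⊆ im B` and this product has the rank of `M`, it has the range of `M`; so every vector
lies in the range of `[(A − λ I) X₋, B]` modulo `ker M ⊆ im B`, and `[A − λ I, B]` is onto.

Conversely, if either condition fails we find `z ≠ 0` with `z B = 0` and a perturbation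
`A₀ + Δ ∈ 𝒜_dat` having `z` as a left eigenvector, which violates the Hautus test. For
`x ∈ ker M` outside `im B` take `Δ = x cᵀ`. For the rank condition we need a real `Δ` with
`Δ X₋ = 0` and `z Δ = λ z − z A₀`: it exists when the entries of `z` span `ℂ` over `ℝ`; otherwise
`z` is a complex multiple of a real vector, and the eigenvalue can be taken real (`λ` itself, or
the real point of `Λ`).
-/

open Module LinearMap

namespace Matrix

variable {K : Type*} [Field K] {l m n o p : Type*} [Fintype m] [Fintype n] [Fintype o] [Fintype p]

theorem rank_le_rank_of_forall_vecMul_eq_zero {A : Matrix m n K} {B : Matrix m o K}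
    (h : ∀ v, v ᵥ* B = 0 → v ᵥ* A = 0) : A.rank ≤ B.rank := by
  have hker : ker Bᵀ.mulVecLin ≤ ker Aᵀ.mulVecLin := fun v hv ↦ by
    simpa [mulVec_transpose] using h v (by simpa [mulVec_transpose] using hv)
  have hA := finrank_range_add_finrank_ker Aᵀ.mulVecLin
  have hB := finrank_range_add_finrank_ker Bᵀ.mulVecLin
  have := Submodule.finrank_mono hker
  rw [← rank_transpose A, ← rank_transpose B]
  simp only [rank] at hA hB ⊢
  omega

theorem rank_mul_eq_left_of_forall_vecMul_eq_zero {A : Matrix m n K} {S : Matrix n o K}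
    (h : ∀ v, v ᵥ* (A * S) = 0 → v ᵥ* A = 0) : (A * S).rank = A.rank :=
  (rank_mul_le_left A S).antisymm (rank_le_rank_of_forall_vecMul_eq_zero h)

theorem mem_range_mulVecLin_of_forall_vecMul_eq_zero {B : Matrix m n K} {x : m → K}
    (h : ∀ z, z ᵥ* B = 0 → z ⬝ᵥ x = 0) : x ∈ range B.mulVecLin := by
  classical
  set B' : Matrix m (n ⊕ Unit) K := fromCols B (replicateCol Unit x)
  have hle : range B.mulVecLin ≤ range B'.mulVecLin := by
    rintro _ ⟨y, rfl⟩
    exact ⟨Sum.elim y 0, by simp [B']⟩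
  have hrank : B'.rank ≤ B.rank := rank_le_rank_of_forall_vecMul_eq_zero fun z hz ↦ by
    ext (j | _)
    · exact congrFun hz j
    · simp [B', h z hz, vecMul, replicateCol]
  rw [Submodule.eq_of_le_of_finrank_le hle hrank]
  exact ⟨Pi.single (Sum.inr ()) 1, by ext; simp [B', mulVec, replicateCol]⟩

theorem rank_eq_card_iff_forall_vecMul_eq_zero {A : Matrix m n K} :
    A.rank = Fintype.card m ↔ ∀ v, v ᵥ* A = 0 → v = 0 := by
  rw [rank_eq_finrank_span_row, eq_comm, ← Set.finrank,
    ← linearIndependent_iff_card_eq_finrank_span, Fintype.linearIndependent_iff]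
  refine forall_congr' fun v ↦ ?_
  rw [vecMul_eq_sum, funext_iff (f := v)]
  rfl

theorem rank_fromCols_sub_smul_one_eq_card_iff [DecidableEq m] {A : Matrix m m K}
    {B : Matrix m n K} {lam : K} :
    (fromCols (A - lam • 1) B).rank = Fintype.card m ↔
      ∀ z, z ᵥ* A = lam • z → z ᵥ* B = 0 → z = 0 := by
  simp only [rank_eq_card_iff_forall_vecMul_eq_zero, vecMul_fromCols, ← Sum.elim_zero_zero,
    Sum.elim_eq_iff, vecMul_sub, vecMul_smul, vecMul_one, sub_eq_zero, and_imp]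

theorem rank_fromCols_eq_card_of_rank_mul_eq {P : Matrix l m K} {A : Matrix m n K}
    {X : Matrix n o K} {B : Matrix m p K}
    (hker : ker P.mulVecLin ≤ range B.mulVecLin)
    (hrank : (P * fromCols (A * X) B).rank = P.rank) :
    (fromCols A B).rank = Fintype.card m := by
  set S := fromCols (A * X) B
  have hrange : range (P * S).mulVecLin = range P.mulVecLin :=
    Submodule.eq_of_le_of_finrank_eq (by rw [mulVecLin_mul]; exact range_comp_le_range _ _) hrank
  suffices range (fromCols A B).mulVecLin = ⊤ by
    rw [rank, this, finrank_top, finrank_fintype_fun_eq_card]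
  refine eq_top_iff.2 fun x _ ↦ ?_
  obtain ⟨y, hy⟩ : P *ᵥ x ∈ range (P * S).mulVecLin := hrange ▸ ⟨x, rfl⟩
  obtain ⟨w, hw⟩ := hker (show x - S *ᵥ y ∈ ker P.mulVecLin by
    rw [mem_ker, mulVecLin_apply, mulVec_sub, mulVec_mulVec, ← hy, mulVecLin_apply, sub_self])
  refine ⟨Sum.elim (X *ᵥ (y ∘ Sum.inl)) (y ∘ Sum.inr + w), ?_⟩
  rw [mulVecLin_apply, eq_sub_iff_add_eq] at hw
  rw [← hw]
  simp [S, mulVec_add, ← mulVec_mulVec]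
  abel

theorem rank_map_algebraMap {L : Type*} [Field L] [Algebra K L] (A : Matrix m n K) :
    (A.map (algebraMap K L)).rank = A.rank := by
  obtain ⟨κ, a, ha, hspan, hli⟩ := exists_linearIndependent' K A.row
  have : Fintype κ := Fintype.ofInjective a ha
  have hli' : LinearIndependent L ((A.map (algebraMap K L)).row ∘ a) :=
    linearIndependent_algebraMap_comp_iff.2 hli
  have hspan' : Submodule.span L (Set.range ((A.map (algebraMap K L)).row ∘ a)) =
      Submodule.span L (Set.range (A.map (algebraMap K L)).row) := by
    refine le_antisymm (Submodule.span_mono (Set.range_comp_subset_range _ _)) ?_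
    rw [Submodule.span_le]
    rintro _ ⟨i, rfl⟩
    have hi : A.row i ∈ Submodule.span K (Set.range (A.row ∘ a)) :=
      hspan ▸ Submodule.subset_span ⟨i, rfl⟩
    have := Submodule.mem_map_of_mem (f := (Algebra.linearMap K L).compLeft n) hi
    rw [Submodule.map_span, ← Set.range_comp] at this
    exact Submodule.span_le_restrictScalars K L _ this
  rw [rank_eq_finrank_span_row, rank_eq_finrank_span_row, ← hspan, ← hspan',
    finrank_span_eq_card hli, finrank_span_eq_card hli']

theorem exists_eq_mul_iff_mul_eq_zero {P : Matrix l m K} {Q : Matrix m n K}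
    (h : ker P.mulVecLin = range Q.mulVecLin) {ι : Type*} (G : Matrix m ι K) :
    (∃ W : Matrix n ι K, G = Q * W) ↔ P * G = 0 := by
  classical
  constructor
  · rintro ⟨W, rfl⟩
    have hPQ : P.mulVecLin ∘ₗ Q.mulVecLin = 0 := range_le_ker_iff.1 h.ge
    rw [← mulVecLin_mul] at hPQ
    have hPQ' : P * Q = 0 := by
      ext i j
      exact (by simpa using congrFun (LinearMap.congr_fun hPQ (Pi.single j 1)) i :
        (P *ᵥ Q.col j) i = 0)
    rw [← Matrix.mul_assoc, hPQ', Matrix.zero_mul]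
  · intro hPG
    have hcol (t : ι) : (fun i ↦ G i t) ∈ range Q.mulVecLin := by
      rw [← h, mem_ker, mulVecLin_apply]
      ext i
      simpa [mul_apply, mulVec, dotProduct] using congrFun (congrFun hPG i) t
    choose w hw using hcol
    refine ⟨of fun j t ↦ w t j, ?_⟩
    ext i t
    simpa [mul_apply, mulVec, dotProduct] using (congrFun (hw t) i).symm

theorem vecMul_add_vecMulVec_eq_smul {ζ a : n → K} (h : ζ ⬝ᵥ a ≠ 0) (A : Matrix n n K) (μ : K) :
    ζ ᵥ* (A + vecMulVec a ((ζ ⬝ᵥ a)⁻¹ • (μ • ζ - ζ ᵥ* A))) = μ • ζ := by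
  rw [vecMul_add, vecMul_vecMulVec, smul_smul, mul_inv_cancel₀ h, one_smul, add_sub_cancel]

end Matrix

theorem Complex.span_range_eq_top_or_eq_smul_ofReal {ι : Type*} [Fintype ι] (z : ι → ℂ) :
    Submodule.span ℝ (Set.range z) = ⊤ ∨ ∃ (w : ℂ) (ζ : ι → ℝ), z = w • (Complex.ofReal ∘ ζ) := by
  refine or_iff_not_imp_left.2 fun h ↦ ?_
  have hlt := Submodule.finrank_lt h
  rw [Complex.finrank_real_complex] at hlt
  obtain ⟨w, hw⟩ := finrank_le_one_iff.1 (Nat.le_of_lt_succ hlt)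
  choose c hc using fun i ↦ hw ⟨z i, Submodule.subset_span ⟨i, rfl⟩⟩
  refine ⟨w, c, funext fun i ↦ ?_⟩
  simpa [Complex.real_smul, mul_comm] using (congrArg Subtype.val (hc i)).symm

theorem exists_ofReal_eq_and_eq_smul {ι : Type*} {r₀ r₁ : ι → ℝ} {lam : ℂ}
    (h : Complex.ofReal ∘ r₀ = lam • (Complex.ofReal ∘ r₁)) (μ₀ : ℝ) :
    ∃ μ : ℝ, ((μ : ℂ) = lam ∨ μ = μ₀) ∧ r₀ = μ • r₁ := by
  by_cases hr₁ : r₁ = 0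
  · refine ⟨μ₀, Or.inr rfl, funext fun i ↦ ?_⟩
    simpa [hr₁] using congrFun h i
  obtain ⟨t, ht⟩ := Function.ne_iff.1 hr₁
  have him : lam.im * r₁ t = 0 := by simpa using (congrArg Complex.im (congrFun h t)).symm
  refine ⟨lam.re, Or.inl (Complex.ext rfl ?_), funext fun i ↦ ?_⟩
  · simpa using ((mul_eq_zero.1 him).resolve_right ht).symm
  · simpa using congrArg Complex.re (congrFun h i)

section Complexification

variable {a b : ℕ}

theorem cx_add (P Q : Matrix (Fin a) (Fin b) ℝ) : cx (P + Q) = cx P + cx Q :=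
  Matrix.map_add _ (map_add _) P Q

theorem cx_mul {c : ℕ} (P : Matrix (Fin a) (Fin b) ℝ) (Q : Matrix (Fin b) (Fin c) ℝ) :
    cx (P * Q) = cx P * cx Q :=
  Matrix.map_mul

theorem rank_cx (P : Matrix (Fin a) (Fin b) ℝ) : (cx P).rank = P.rank :=
  rank_map_algebraMap P

theorem ofReal_comp_vecMul (v : Fin a → ℝ) (P : Matrix (Fin a) (Fin b) ℝ) :
    Complex.ofReal ∘ (v ᵥ* P) = (Complex.ofReal ∘ v) ᵥ* cx P :=
  funext (RingHom.map_vecMul (algebraMap ℝ ℂ) P v)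

theorem ofReal_comp_mulVec (P : Matrix (Fin a) (Fin b) ℝ) (v : Fin b → ℝ) :
    Complex.ofReal ∘ (P *ᵥ v) = cx P *ᵥ (Complex.ofReal ∘ v) :=
  funext (RingHom.map_mulVec (algebraMap ℝ ℂ) P v)

theorem comp_vecMul_cx (ℓ : ℂ →ₗ[ℝ] ℝ) (z : Fin a → ℂ) (P : Matrix (Fin a) (Fin b) ℝ) :
    ℓ ∘ (z ᵥ* cx P) = (ℓ ∘ z) ᵥ* P := by
  ext j
  simp only [Function.comp_apply, vecMul, dotProduct, map_sum]
  refine Finset.sum_congr rfl fun i _ ↦ ?_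
  change ℓ (z i * (P i j : ℂ)) = ℓ (z i) * P i j
  rw [mul_comm, ← Complex.real_smul, map_smul, smul_eq_mul, mul_comm]

theorem comp_cx_mulVec (ℓ : ℂ →ₗ[ℝ] ℝ) (P : Matrix (Fin a) (Fin b) ℝ) (z : Fin b → ℂ) :
    ℓ ∘ (cx P *ᵥ z) = P *ᵥ (ℓ ∘ z) := by
  ext j
  simp [mulVec, dotProduct, cx, ← Complex.real_smul]

theorem ofReal_comp_re_add_I_smul_ofReal_comp_im (z : Fin a → ℂ) :
    Complex.ofReal ∘ (Complex.reLm ∘ z) + Complex.I • Complex.ofReal ∘ (Complex.imLm ∘ z) = z := by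
  ext i
  simpa [mul_comm] using Complex.re_add_im (z i)

theorem ker_cx_le_range_cx {M : Matrix (Fin a) (Fin b) ℝ} {c : ℕ} {B : Matrix (Fin b) (Fin c) ℝ}
    (h : ker M.mulVecLin ≤ range B.mulVecLin) : ker (cx M).mulVecLin ≤ range (cx B).mulVecLin := by
  intro x hx
  rw [mem_ker, mulVecLin_apply] at hx
  have hpart (ℓ : ℂ →ₗ[ℝ] ℝ) : ∃ y, B *ᵥ y = ℓ ∘ x :=
    h (by rw [mem_ker, mulVecLin_apply, ← comp_cx_mulVec, hx]; ext; simp)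
  obtain ⟨y₁, hy₁⟩ := hpart Complex.reLm
  obtain ⟨y₂, hy₂⟩ := hpart Complex.imLm
  refine ⟨Complex.ofReal ∘ y₁ + Complex.I • Complex.ofReal ∘ y₂, ?_⟩
  rw [mulVecLin_apply, mulVec_add, mulVec_smul, ← ofReal_comp_mulVec, ← ofReal_comp_mulVec,
    hy₁, hy₂, ofReal_comp_re_add_I_smul_ofReal_comp_im]

end Complexification

section Informativity

variable {n m k T : ℕ} {A₀ : Matrix (Fin n) (Fin n) ℝ} {B : Matrix (Fin n) (Fin m) ℝ}
  {M : Matrix (Fin k) (Fin n) ℝ} {X : Matrix (Fin n) (Fin T) ℝ} {R : Matrix (Fin k) (Fin T) ℝ}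
  {Λ : Set ℂ} {μ₀ : ℝ} {lam : ℂ}

def HautusRankOn (Λ : Set ℂ) (A : Matrix (Fin n) (Fin n) ℝ) (B : Matrix (Fin n) (Fin m) ℝ) :
    Prop :=
  ∀ lam ∈ Λ, (fromCols (cx A - lam • 1) (cx B)).rank = n

theorem eq_zero_of_rank_fromCols_cx_eq {A : Matrix (Fin n) (Fin n) ℝ} {μ : ℝ}
    (h : (fromCols (cx A - (μ : ℂ) • 1) (cx B)).rank = n) {ζ : Fin n → ℝ}
    (hζA : ζ ᵥ* A = μ • ζ) (hζB : ζ ᵥ* B = 0) : ζ = 0 := by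
  have hcx : fromCols (cx A - (μ : ℂ) • 1) (cx B) =
      (fromCols (A - μ • 1) B).map (algebraMap ℝ ℂ) := by
    ext i (j | j)
    · by_cases hij : i = j <;> simp [cx, one_apply, hij]
    · simp [cx]
  rw [hcx, rank_map_algebraMap] at h
  exact rank_fromCols_sub_smul_one_eq_card_iff.1 (h.trans (Fintype.card_fin n).symm) ζ hζA hζB

theorem vecMul_cx_vecMulVec (z : Fin n → ℂ) (c : Fin n → ℝ) (w : Fin T → ℝ) :
    z ᵥ* cx (vecMulVec c w) = (∑ i, c i • z i) • (Complex.ofReal ∘ w) := by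
  ext j
  simp only [vecMul, dotProduct, Pi.smul_apply, smul_eq_mul, Finset.sum_mul]
  exact Finset.sum_congr rfl fun i _ ↦ by simp [cx, vecMulVec_apply, Complex.real_smul]; ring

theorem exists_mul_eq_zero_and_vecMul_cx_eq {z u : Fin n → ℂ}
    (hz : Submodule.span ℝ (Set.range z) = ⊤) (hu : u ᵥ* cx X = 0) :
    ∃ Δ : Matrix (Fin n) (Fin n) ℝ, Δ * X = 0 ∧ z ᵥ* cx Δ = u := by
  have hsurj (c : ℂ) : ∃ a : Fin n → ℝ, ∑ i, a i • z i = c :=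
    (Submodule.mem_span_range_iff_exists_fun ℝ).1 (hz ▸ Submodule.mem_top)
  obtain ⟨c₁, hc₁⟩ := hsurj 1
  obtain ⟨c₂, hc₂⟩ := hsurj Complex.I
  refine ⟨vecMulVec c₁ (Complex.reLm ∘ u) + vecMulVec c₂ (Complex.imLm ∘ u), ?_, ?_⟩
  · rw [Matrix.add_mul, vecMulVec_mul, vecMulVec_mul, ← comp_vecMul_cx, ← comp_vecMul_cx, hu]
    ext
    simp [vecMulVec_apply]
  · rw [cx_add, vecMul_add, vecMul_cx_vecMulVec, vecMul_cx_vecMulVec, hc₁, hc₂, one_smul,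
      ofReal_comp_re_add_I_smul_ofReal_comp_im]

theorem eq_zero_of_forall_hautusRankOn_ofReal
    (hfull : ∀ Δ, Δ * X = 0 → HautusRankOn Λ (A₀ + Δ) B) (hμ₀ : (μ₀ : ℂ) ∈ Λ) (hlam : lam ∈ Λ)
    {ζ : Fin n → ℝ} (hζA : Complex.ofReal ∘ (ζ ᵥ* A₀ ᵥ* X) = lam • (Complex.ofReal ∘ (ζ ᵥ* X)))
    (hζB : ζ ᵥ* B = 0) : ζ = 0 := by
  obtain ⟨μ, hμ, hr⟩ := exists_ofReal_eq_and_eq_smul hζA μ₀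
  have hμΛ : (μ : ℂ) ∈ Λ := hμ.elim (· ▸ hlam) (· ▸ hμ₀)
  by_contra hζ
  have hζζ : ζ ⬝ᵥ ζ ≠ 0 := dotProduct_self_eq_zero.not.2 hζ
  have hΔX : vecMulVec ζ ((ζ ⬝ᵥ ζ)⁻¹ • (μ • ζ - ζ ᵥ* A₀)) * X = 0 := by
    rw [vecMulVec_mul, smul_vecMul, sub_vecMul, smul_vecMul, hr, sub_self, smul_zero]
    ext
    simp [vecMulVec_apply]
  exact hζ (eq_zero_of_rank_fromCols_cx_eq (hfull _ hΔX μ hμΛ)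
    (vecMul_add_vecMulVec_eq_smul hζζ A₀ μ) hζB)

theorem eq_zero_of_forall_hautusRankOn
    (hfull : ∀ Δ, Δ * X = 0 → HautusRankOn Λ (A₀ + Δ) B) (hμ₀ : (μ₀ : ℂ) ∈ Λ) (hlam : lam ∈ Λ)
    {z : Fin n → ℂ} (hzA : (z ᵥ* cx A₀ - lam • z) ᵥ* cx X = 0) (hzB : z ᵥ* cx B = 0) :
    z = 0 := by
  rcases Complex.span_range_eq_top_or_eq_smul_ofReal z with hz | ⟨w, ζ, rfl⟩
  · obtain ⟨Δ, hΔX, hzΔ⟩ := exists_mul_eq_zero_and_vecMul_cx_eq (u := lam • z - z ᵥ* cx A₀) hz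
      (by rw [← neg_sub, neg_vecMul, hzA, neg_zero])
    refine rank_fromCols_sub_smul_one_eq_card_iff.1
      ((hfull Δ hΔX lam hlam).trans (Fintype.card_fin n).symm) z ?_ hzB
    rw [cx_add, vecMul_add, hzΔ, add_sub_cancel]
  · by_cases hw : w = 0
    · simp [hw]
    suffices ζ = 0 by simp [this]
    refine eq_zero_of_forall_hautusRankOn_ofReal hfull hμ₀ hlam ?_ ?_
    · rw [smul_vecMul, ← ofReal_comp_vecMul, smul_comm, ← smul_sub, smul_vecMul, smul_eq_zero,
        sub_vecMul, smul_vecMul, ← ofReal_comp_vecMul, ← ofReal_comp_vecMul, sub_eq_zero] at hzA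
      exact hzA.resolve_left hw
    · rw [smul_vecMul, ← ofReal_comp_vecMul, smul_eq_zero] at hzB
      exact funext fun j ↦ by simpa using congrFun (hzB.resolve_left hw) j

theorem ker_le_range_of_forall_hautusRankOn
    (hfull : ∀ Δ, M * Δ = 0 → HautusRankOn Λ (A₀ + Δ) B) (hμ₀ : (μ₀ : ℂ) ∈ Λ) :
    ker M.mulVecLin ≤ range B.mulVecLin := by
  intro x hx
  refine mem_range_mulVecLin_of_forall_vecMul_eq_zero fun ζ hζB ↦ by_contra fun hζx ↦ hζx ?_
  have hMΔ : M * vecMulVec x ((ζ ⬝ᵥ x)⁻¹ • (μ₀ • ζ - ζ ᵥ* A₀)) = 0 := by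
    rw [mul_vecMulVec, show M *ᵥ x = 0 from hx, zero_vecMulVec]
  rw [eq_zero_of_rank_fromCols_cx_eq (hfull _ hMΔ μ₀ hμ₀)
    (vecMul_add_vecMulVec_eq_smul hζx A₀ μ₀) hζB, zero_dotProduct]

theorem fromCols_cx_eq_cx_mul {A : Matrix (Fin n) (Fin n) ℝ} (hA : M * A * X = R) (lam : ℂ) :
    fromCols (cx R - lam • (cx M * cx X)) (cx M * cx B) =
      cx M * fromCols ((cx A - lam • 1) * cx X) (cx B) := by
  rw [mul_fromCols, ← hA, cx_mul, cx_mul, Matrix.sub_mul, Matrix.mul_sub, Matrix.smul_mul,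
    Matrix.one_mul, Matrix.mul_smul, Matrix.mul_assoc]

theorem rank_fromCols_cx_eq_rank_of_forall_hautusRankOn
    (hfull : ∀ Δ, Δ * X = 0 → HautusRankOn Λ (A₀ + Δ) B) (hA₀ : M * A₀ * X = R)
    (hμ₀ : (μ₀ : ℂ) ∈ Λ) (hlam : lam ∈ Λ) :
    (fromCols (cx R - lam • (cx M * cx X)) (cx M * cx B)).rank = M.rank := by
  rw [fromCols_cx_eq_cx_mul hA₀, ← rank_cx M]
  refine rank_mul_eq_left_of_forall_vecMul_eq_zero fun v hv ↦ ?_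
  rw [← vecMul_vecMul, vecMul_fromCols, ← Sum.elim_zero_zero, Sum.elim_eq_iff] at hv
  refine eq_zero_of_forall_hautusRankOn hfull hμ₀ hlam ?_ hv.2
  rw [← hv.1, ← vecMul_vecMul, vecMul_sub, vecMul_smul, vecMul_one]

theorem hautusRankOn_of_ker_le_range {A : Matrix (Fin n) (Fin n) ℝ}
    (hker : ker M.mulVecLin ≤ range B.mulVecLin) (hA : M * A * X = R)
    (hrank : ∀ lam ∈ Λ, (fromCols (cx R - lam • (cx M * cx X)) (cx M * cx B)).rank = M.rank) :
    HautusRankOn Λ A B := fun lam hlam ↦ by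
  simpa using rank_fromCols_eq_card_of_rank_mul_eq (ker_cx_le_range_cx hker)
    (by rw [← fromCols_cx_eq_cx_mul hA, rank_cx]; exact hrank lam hlam)

theorem forall_hautusRankOn_iff (hA₀ : M * A₀ * X = R) (hμ₀ : (μ₀ : ℂ) ∈ Λ) :
    (∀ A, M * A * X = R → HautusRankOn Λ A B) ↔
      ker M.mulVecLin ≤ range B.mulVecLin ∧
        ∀ lam ∈ Λ, (fromCols (cx R - lam • (cx M * cx X)) (cx M * cx B)).rank = M.rank := by
  refine ⟨fun h ↦ ⟨?_, fun lam hlam ↦ ?_⟩,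
    fun ⟨hker, hrank⟩ A hA ↦ hautusRankOn_of_ker_le_range hker hA hrank⟩
  · refine ker_le_range_of_forall_hautusRankOn (fun Δ hΔ ↦ h (A₀ + Δ) ?_) hμ₀
    rw [Matrix.mul_add, Matrix.add_mul, hΔ, Matrix.zero_mul, add_zero, hA₀]
  · refine rank_fromCols_cx_eq_rank_of_forall_hautusRankOn (fun Δ hΔ ↦ h (A₀ + Δ) ?_) hA₀ hμ₀ hlam
    rw [Matrix.mul_add, Matrix.add_mul, Matrix.mul_assoc M Δ, hΔ, Matrix.mul_zero, add_zero, hA₀]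

end Informativity

theorem Adat_eq_setOf {n m p q T k : ℕ} {B : Matrix (Fin n) (Fin m) ℝ}
    {C : Matrix (Fin p) (Fin n) ℝ} {D : Matrix (Fin p) (Fin m) ℝ} {E : Matrix (Fin n) (Fin q) ℝ}
    {F : Matrix (Fin p) (Fin q) ℝ} {U : Matrix (Fin m) (Fin T) ℝ}
    {X : Matrix (Fin n) (Fin (T + 1)) ℝ} {Y : Matrix (Fin p) (Fin T) ℝ}
    {M : Matrix (Fin k) (Fin n) ℝ} {N : Matrix (Fin k) (Fin p) ℝ}
    (hMN : ker (fromCols M N).mulVecLin = range (fromRows E F).mulVecLin)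
    {R : Matrix (Fin k) (Fin T) ℝ}
    (hR : R = M * (Xplus X - B * U) + N * (Y - C * Xminus X - D * U)) :
    Adat B C D E F U X Y = {A | M * A * Xminus X = R} := by
  ext A
  have hres : M * (Xplus X - A * Xminus X - B * U) + N * (Y - C * Xminus X - D * U) =
      R - M * A * Xminus X := by
    rw [hR]
    simp only [Matrix.mul_sub, Matrix.mul_assoc]
    abel
  have key := exists_eq_mul_iff_mul_eq_zero hMN
    (fromRows (Xplus X - A * Xminus X - B * U) (Y - C * Xminus X - D * U))
  rw [fromCols_mul_fromRows, hres, sub_eq_zero, eq_comm] at key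
  simp only [fromRows_mul, fromRows_inj.eq_iff, sub_sub, sub_eq_iff_eq_add'] at key
  exact key

theorem informative_controllability_stabilizability_general (n m p q T k : ℕ)
    (B : Matrix (Fin n) (Fin m) ℝ) (C : Matrix (Fin p) (Fin n) ℝ)
    (D : Matrix (Fin p) (Fin m) ℝ) (E : Matrix (Fin n) (Fin q) ℝ)
    (F : Matrix (Fin p) (Fin q) ℝ)
    (U : Matrix (Fin m) (Fin T) ℝ) (X : Matrix (Fin n) (Fin (T + 1)) ℝ)
    (Y : Matrix (Fin p) (Fin T) ℝ)
    (M : Matrix (Fin k) (Fin n) ℝ) (N : Matrix (Fin k) (Fin p) ℝ)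
    (hAdat : (Adat B C D E F U X Y).Nonempty)
    (hMN : LinearMap.ker (fromCols M N).mulVecLin
      = LinearMap.range (fromRows E F).mulVecLin)
    (R : Matrix (Fin k) (Fin T) ℝ)
    (hR : R = M * (Xplus X - B * U) + N * (Y - C * Xminus X - D * U)) :
    ((∀ A ∈ Adat B C D E F U X Y, ∀ lam : ℂ,
        (fromCols (cx A - lam • 1) (cx B)).rank = n) ↔
      (LinearMap.ker M.mulVecLin ≤ LinearMap.range B.mulVecLin ∧
        ∀ lam : ℂ,
          (fromCols (cx R - lam • (cx M * cx (Xminus X))) (cx M * cx B)).rank = M.rank))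
    ∧
    ((∀ A ∈ Adat B C D E F U X Y, ∀ lam : ℂ, 1 ≤ ‖lam‖ →
        (fromCols (cx A - lam • 1) (cx B)).rank = n) ↔
      (LinearMap.ker M.mulVecLin ≤ LinearMap.range B.mulVecLin ∧
        ∀ lam : ℂ, 1 ≤ ‖lam‖ →
          (fromCols (cx R - lam • (cx M * cx (Xminus X))) (cx M * cx B)).rank
            = M.rank)) := by
  rw [Adat_eq_setOf hMN hR] at hAdat ⊢
  obtain ⟨A₀, hA₀⟩ := hAdat
  constructor
  · simpa [HautusRankOn] using forall_hautusRankOn_iff (B := B) hA₀ (Set.mem_univ ((0 : ℝ) : ℂ))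
  · simpa [HautusRankOn] using
      forall_hautusRankOn_iff (B := B) hA₀ (Λ := {lam : ℂ | 1 ≤ ‖lam‖}) (μ₀ := 1) (by simp)

/-- informativity of the data for controllability / stabilizability of (A,B). -/
theorem informative_controllability_stabilizability (n m p q T k : ℕ)
    (hn : 1 ≤ n) (hm : 1 ≤ m) (hp : 1 ≤ p) (hq : 1 ≤ q) (hT : 1 ≤ T)
    (B : Matrix (Fin n) (Fin m) ℝ) (C : Matrix (Fin p) (Fin n) ℝ)
    (D : Matrix (Fin p) (Fin m) ℝ) (E : Matrix (Fin n) (Fin q) ℝ)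
    (F : Matrix (Fin p) (Fin q) ℝ)
    (U : Matrix (Fin m) (Fin T) ℝ) (X : Matrix (Fin n) (Fin (T + 1)) ℝ)
    (Y : Matrix (Fin p) (Fin T) ℝ)
    (M : Matrix (Fin k) (Fin n) ℝ) (N : Matrix (Fin k) (Fin p) ℝ)
    (hAdat : (Adat B C D E F U X Y).Nonempty)
    (hMN : LinearMap.ker (fromCols M N).mulVecLin
      = LinearMap.range (fromRows E F).mulVecLin)
    (R : Matrix (Fin k) (Fin T) ℝ)
    (hR : R = M * (Xplus X - B * U) + N * (Y - C * Xminus X - D * U)) :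
    ((∀ A ∈ Adat B C D E F U X Y, ∀ lam : ℂ,
        (fromCols (cx A - lam • 1) (cx B)).rank = n) ↔
      (LinearMap.ker M.mulVecLin ≤ LinearMap.range B.mulVecLin ∧
        ∀ lam : ℂ,
          (fromCols (cx R - lam • (cx M * cx (Xminus X))) (cx M * cx B)).rank = M.rank))
    ∧
    ((∀ A ∈ Adat B C D E F U X Y, ∀ lam : ℂ, 1 ≤ ‖lam‖ →
        (fromCols (cx A - lam • 1) (cx B)).rank = n) ↔
      (LinearMap.ker M.mulVecLin ≤ LinearMap.range B.mulVecLin ∧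
        ∀ lam : ℂ, 1 ≤ ‖lam‖ →
          (fromCols (cx R - lam • (cx M * cx (Xminus X))) (cx M * cx B)).rank
            = M.rank)) :=
  informative_controllability_stabilizability_general n m p q T k B C D E F U X Y M N hAdat hMN R hR
end

section
/- Noiseless case: let B ∈ ℝ^{n×m}, and let U₋ ∈ ℝ^{m×T}, X ∈ ℝ^{n×(T+1)} be data with X₋, X₊ the first and last T columns of X; assume the set 𝒜⁰ := { A ∈ ℝ^{n×n} : X₊ = A X₋ + B U₋ } is nonempty. Then rank [A − λI, B] = n for every A ∈ 𝒜⁰ and every λ ∈ ℂ if and only if rank [X₊ − λX₋, B] = n for all λ ∈ ℂ. Similarly, rank [A − λI, B] = n for every A ∈ 𝒜⁰ and every λ ∈ ℂ with |λ| ≥ 1 if and only if rank [X₊ − λX₋, B] = n for all λ ∈ ℂ with |λ| ≥ 1. -/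
open Matrix

/-!
Fix one matrix `A` consistent with the data, `Xp = A Xm + B U`; the consistent matrices are then
the `A + Δ` with `Δ Xm = 0`. A left vector `ξ` with `ξ A = λ ξ` and `ξ B = 0` satisfies
`ξ (Xp - λ Xm) = 0`, which gives one implication. Conversely, let `ξ = p + i q ≠ 0` satisfy
`ξ (Xp - λ Xm) = 0` and `ξ B = 0`. If `p, q` are linearly independent, these are the real
equations `P B = 0`, `P Xp = Λ P Xm` for the matrix `P` with rows `p, q` and the real `2 × 2`
matrix `Λ` of multiplication by `λ`; with a right inverse `F` of `P`, the matrix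
`A' = A + F (Λ P - P A)` is consistent and satisfies `P A' = Λ P`, i.e. `ξ A' = λ ξ`. Otherwise some
nonzero multiple of `ξ` is a real vector `η`, and `η Xp = λ η Xm` forces `η Xp = r η Xm` for a
real `r` with `|r| = |λ|` (either `λ` is real or `η Xm = 0`); the same construction with the
single row `η` then yields a consistent `A'` with `η A' = r η`. Both Hautus conditions constrain
`λ` only through `|λ|`, so this replacement is harmless.
-/

namespace Matrix

variable {K ι m n₁ n₂ : Type*} [Field K] [Fintype ι] [Fintype n₁] [Fintype n₂]

theorem rank_eq_card_iff_forall_vecMul_eq_zero_s12 (M : Matrix ι n₁ K) :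
    M.rank = Fintype.card ι ↔ ∀ ξ, ξ ᵥ* M = 0 → ξ = 0 := by
  rw [rank_eq_finrank_span_row, ← Set.finrank, eq_comm,
    ← linearIndependent_iff_card_eq_finrank_span, ← vecMul_injective_iff, ← coe_vecMulLinear,
    injective_iff_map_eq_zero]
  rfl

theorem rank_fromCols_eq_card_iff (M₁ : Matrix ι n₁ K) (M₂ : Matrix ι n₂ K) :
    (fromCols M₁ M₂).rank = Fintype.card ι ↔ ∀ ξ, ξ ᵥ* M₁ = 0 → ξ ᵥ* M₂ = 0 → ξ = 0 := by
  simp only [rank_eq_card_iff_forall_vecMul_eq_zero_s12, vecMul_fromCols, ← Sum.elim_zero_zero,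
    Sum.elim_eq_iff, and_imp]

theorem exists_mul_eq_one_of_linearIndependent_rows [Fintype m] [DecidableEq ι] [DecidableEq m]
    {P : Matrix ι m K} (hP : LinearIndependent K P.row) : ∃ F : Matrix m ι K, P * F = 1 := by
  have hker : LinearMap.ker Pᵀ.mulVecLin = ⊥ := by
    rw [mulVecLin_transpose, LinearMap.ker_eq_bot, coe_vecMulLinear, vecMul_injective_iff]
    exact hP
  obtain ⟨g, hg⟩ := Pᵀ.mulVecLin.exists_leftInverse_of_injective hker
  refine ⟨(LinearMap.toMatrix' g)ᵀ, ?_⟩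
  have hg' := congrArg LinearMap.toMatrix' hg
  rw [LinearMap.toMatrix'_comp, LinearMap.toMatrix'_id, ← toLin'_apply',
    LinearMap.toMatrix'_toLin'] at hg'
  rw [← transpose_transpose (P * _), transpose_mul, transpose_transpose, hg', transpose_one]

end Matrix

def reImRows {ι : Type*} (ξ : ι → ℂ) : Matrix (Fin 2) ι ℝ :=
  Matrix.of ![fun i => (ξ i).re, fun i => (ξ i).im]

section ReIm

variable {ι : Type*}

theorem reImRows_injective : Function.Injective (reImRows (ι := ι)) := by
  intro ξ ζ h
  funext i
  exact Complex.ext (congrFun (congrFun h 0) i) (congrFun (congrFun h 1) i)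

theorem reImRows_zero : reImRows (0 : ι → ℂ) = 0 := by
  ext k i; fin_cases k <;> simp [reImRows]

theorem reImRows_smul (lam : ℂ) (ξ : ι → ℂ) :
    reImRows (lam • ξ) = Algebra.leftMulMatrix Complex.basisOneI lam * reImRows ξ := by
  ext k i
  fin_cases k <;>
    simp only [reImRows, Algebra.leftMulMatrix_complex, mul_apply, Fin.sum_univ_two, of_apply,
      cons_val', cons_val_fin_one, cons_val_zero, cons_val_one, Fin.zero_eta, Fin.mk_one,
      Fin.isValue, Pi.smul_apply, smul_eq_mul,
      Complex.mul_re, Complex.mul_im] <;> ring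

theorem reImRows_vecMul_map (ξ : ι → ℂ) [Fintype ι] {κ : Type*} (M : Matrix ι κ ℝ) :
    reImRows (ξ ᵥ* M.map (algebraMap ℝ ℂ)) = reImRows ξ * M := by
  ext k j
  fin_cases k <;> simp [reImRows, vecMul, dotProduct, mul_apply, Complex.re_sum, Complex.im_sum]

theorem exists_smul_eq_comp_algebraMap_of_not_linearIndependent {ξ : ι → ℂ}
    (h : ¬ LinearIndependent ℝ (reImRows ξ).row) :
    ∃ c : ℂ, c ≠ 0 ∧ ∃ η : ι → ℝ, c • ξ = algebraMap ℝ ℂ ∘ η := by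
  have h' : ¬ LinearIndependent ℝ ![fun i => (ξ i).re, fun i => (ξ i).im] := h
  simp only [LinearIndependent.pair_iff, not_forall] at h'
  obtain ⟨s, t, hst, hne⟩ := h'
  refine ⟨⟨t, s⟩, fun hc => hne ⟨by simpa using congrArg Complex.im hc,
    by simpa using congrArg Complex.re hc⟩, fun i => t * (ξ i).re - s * (ξ i).im, ?_⟩
  funext i
  have hi := congrFun hst i
  simp only [Pi.add_apply, Pi.smul_apply, smul_eq_mul, Pi.zero_apply] at hi
  refine Complex.ext ?_ ?_ <;>
    simp only [Pi.smul_apply, smul_eq_mul, Complex.mul_re, Complex.mul_im, Function.comp_apply,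
      Complex.coe_algebraMap, Complex.ofReal_re, Complex.ofReal_im]
  linarith

theorem exists_real_eq_smul_of_comp_algebraMap_eq_smul {x y : ι → ℝ} {lam : ℂ}
    (h : algebraMap ℝ ℂ ∘ y = lam • (algebraMap ℝ ℂ ∘ x)) :
    ∃ r : ℝ, |r| = ‖lam‖ ∧ y = r • x := by
  by_cases him : lam.im = 0
  · refine ⟨lam.re, Complex.abs_re_eq_norm.mpr him, funext fun i => ?_⟩
    simpa [him] using congrArg Complex.re (congrFun h i)
  · have hx : x = 0 := funext fun i => by
      simpa [him] using congrArg Complex.im (congrFun h i)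
    have hy : y = 0 := funext fun i => by
      simpa [hx] using congrArg Complex.re (congrFun h i)
    exact ⟨‖lam‖, abs_norm lam, by simp [hx, hy]⟩

theorem comp_algebraMap_eq_zero {v : ι → ℝ} : algebraMap ℝ ℂ ∘ v = 0 ↔ v = 0 :=
  ⟨fun h => funext fun i => by simpa using congrFun h i, fun h => by simp [h]⟩

theorem comp_algebraMap_vecMul_map [Fintype ι] {κ : Type*} (η : ι → ℝ) (M : Matrix ι κ ℝ) :
    (algebraMap ℝ ℂ ∘ η) ᵥ* M.map (algebraMap ℝ ℂ) = algebraMap ℝ ℂ ∘ (η ᵥ* M) :=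
  funext fun j => (RingHom.map_vecMul _ M η j).symm

end ReIm

section Consistent

variable {K ι n p τ : Type*} [Field K] [Fintype n] [Fintype p] [DecidableEq n]
  {A : Matrix n n K} {B : Matrix n p K} {U : Matrix p τ K} {Xm Xp : Matrix n τ K}

theorem exists_eq_mul_add_mul_and_mul_eq_mul [Fintype ι] [DecidableEq ι]
    (hA : Xp = A * Xm + B * U) {P : Matrix ι n K} (hP : LinearIndependent K P.row)
    {Λ : Matrix ι ι K} (hPB : P * B = 0) (hPX : P * Xp = Λ * (P * Xm)) :
    ∃ A' : Matrix n n K, Xp = A' * Xm + B * U ∧ P * A' = Λ * P := by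
  obtain ⟨F, hF⟩ := exists_mul_eq_one_of_linearIndependent_rows hP
  have hW : (Λ * P - P * A) * Xm = 0 := by
    rw [Matrix.sub_mul, Matrix.mul_assoc, Matrix.mul_assoc, ← hPX, hA, Matrix.mul_add,
      ← Matrix.mul_assoc P B, hPB, Matrix.zero_mul, add_zero, sub_self]
  refine ⟨A + F * (Λ * P - P * A), ?_, ?_⟩
  · rw [Matrix.add_mul, Matrix.mul_assoc F, hW, Matrix.mul_zero, add_zero, hA]
  · rw [Matrix.mul_add, ← Matrix.mul_assoc, hF, Matrix.one_mul, add_sub_cancel]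

theorem exists_eq_mul_add_mul_and_vecMul_eq_smul (hA : Xp = A * Xm + B * U) {η : n → K}
    (hη : η ≠ 0) (hηB : η ᵥ* B = 0) {r : K} (hηX : η ᵥ* Xp = r • (η ᵥ* Xm)) :
    ∃ A' : Matrix n n K, Xp = A' * Xm + B * U ∧ η ᵥ* A' = r • η := by
  obtain ⟨A', hA', hηA'⟩ := exists_eq_mul_add_mul_and_mul_eq_mul hA
    (P := replicateRow Unit η) (Λ := r • 1) (linearIndependent_unique_iff.mpr hη)
    (by rw [← replicateRow_vecMul, hηB, replicateRow_zero])
    (by rw [← replicateRow_vecMul, ← replicateRow_vecMul, hηX, Matrix.smul_mul, Matrix.one_mul,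
      replicateRow_smul])
  refine ⟨A', hA', replicateRow_injective (ι := Unit) ?_⟩
  rw [replicateRow_vecMul, hηA', Matrix.smul_mul, Matrix.one_mul, replicateRow_smul]

end Consistent

section Hautus

variable {n m T : ℕ} {A : Matrix (Fin n) (Fin n) ℝ} {B : Matrix (Fin n) (Fin m) ℝ}
  {U : Matrix (Fin m) (Fin T) ℝ} {Xm Xp : Matrix (Fin n) (Fin T) ℝ}

theorem vecMul_cx_eq_smul_vecMul_cx_of_consistent (hA : Xp = A * Xm + B * U) {lam : ℂ}
    {ξ : Fin n → ℂ} (hξA : ξ ᵥ* cx A = lam • ξ) (hξB : ξ ᵥ* cx B = 0) :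
    ξ ᵥ* cx Xp = lam • (ξ ᵥ* cx Xm) := by
  unfold cx at *
  rw [hA, Matrix.map_add _ (map_add _), Matrix.map_mul, Matrix.map_mul, vecMul_add,
    ← vecMul_vecMul, ← vecMul_vecMul, hξA, hξB, zero_vecMul, add_zero, smul_vecMul]

theorem exists_consistent_vecMul_cx_eq_smul (hA : Xp = A * Xm + B * U) {lam : ℂ}
    {ξ : Fin n → ℂ} (hξ : ξ ≠ 0) (hξB : ξ ᵥ* cx B = 0)
    (hξX : ξ ᵥ* cx Xp = lam • (ξ ᵥ* cx Xm)) :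
    ∃ A' : Matrix (Fin n) (Fin n) ℝ, Xp = A' * Xm + B * U ∧ ∃ lam' : ℂ, ‖lam'‖ = ‖lam‖ ∧
      ∃ ζ ≠ 0, ζ ᵥ* cx A' = lam' • ζ ∧ ζ ᵥ* cx B = 0 := by
  unfold cx at *
  by_cases hind : LinearIndependent ℝ (reImRows ξ).row
  · obtain ⟨A', hA', hξA'⟩ := exists_eq_mul_add_mul_and_mul_eq_mul hA hind
      (Λ := Algebra.leftMulMatrix Complex.basisOneI lam)
      (by rw [← reImRows_vecMul_map, hξB, reImRows_zero])
      (by rw [← reImRows_vecMul_map, hξX, reImRows_smul, reImRows_vecMul_map])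
    refine ⟨A', hA', lam, rfl, ξ, hξ, reImRows_injective ?_, hξB⟩
    rw [reImRows_vecMul_map, reImRows_smul, hξA']
  · obtain ⟨c, hc, η, hη⟩ := exists_smul_eq_comp_algebraMap_of_not_linearIndependent hind
    have hη0 : η ≠ 0 := by
      rintro rfl
      exact hξ (by simpa [hc] using hη)
    have hηB : η ᵥ* B = 0 := comp_algebraMap_eq_zero.mp <| by
      rw [← comp_algebraMap_vecMul_map, ← hη, smul_vecMul, hξB, smul_zero]
    have hηX : algebraMap ℝ ℂ ∘ (η ᵥ* Xp) = lam • (algebraMap ℝ ℂ ∘ (η ᵥ* Xm)) := by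
      rw [← comp_algebraMap_vecMul_map, ← comp_algebraMap_vecMul_map, ← hη, smul_vecMul,
        smul_vecMul, hξX, smul_comm]
    obtain ⟨r, hr, hrX⟩ := exists_real_eq_smul_of_comp_algebraMap_eq_smul hηX
    obtain ⟨A', hA', hηA'⟩ := exists_eq_mul_add_mul_and_vecMul_eq_smul hA hη0 hηB hrX
    refine ⟨A', hA', r, by rw [Complex.norm_real, Real.norm_eq_abs, hr], algebraMap ℝ ℂ ∘ η,
      ?_, ?_, ?_⟩
    · exact mt comp_algebraMap_eq_zero.mp hη0
    · rw [comp_algebraMap_vecMul_map, hηA']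
      funext i
      simp
    · rw [comp_algebraMap_vecMul_map, hηB, comp_algebraMap_eq_zero]

theorem forall_consistent_rank_fromCols_iff (hA : Xp = A * Xm + B * U) (R : Set ℝ) :
    (∀ A' : Matrix (Fin n) (Fin n) ℝ, Xp = A' * Xm + B * U → ∀ lam : ℂ, ‖lam‖ ∈ R →
        (fromCols (cx A' - lam • 1) (cx B)).rank = n) ↔
      ∀ lam : ℂ, ‖lam‖ ∈ R → (fromCols (cx Xp - lam • cx Xm) (cx B)).rank = n := by
  have hrank {k : ℕ} (M : Matrix (Fin n) (Fin k) ℂ) : (fromCols M (cx B)).rank = n ↔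
      ∀ ξ, ξ ᵥ* M = 0 → ξ ᵥ* cx B = 0 → ξ = 0 := by
    simpa using rank_fromCols_eq_card_iff M (cx B)
  simp only [hrank, vecMul_sub, vecMul_smul, vecMul_one, sub_eq_zero]
  constructor
  · intro h lam hlam ξ hξX hξB
    by_contra hξ
    obtain ⟨A', hA', lam', hnorm, ζ, hζ, hζA', hζB⟩ :=
      exists_consistent_vecMul_cx_eq_smul hA hξ hξB hξX
    exact hζ (h A' hA' lam' (hnorm ▸ hlam) ζ hζA' hζB)
  · intro h A' hA' lam hlam ξ hξA' hξB
    exact h lam hlam ξ (vecMul_cx_eq_smul_vecMul_cx_of_consistent hA' hξA' hξB) hξB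

end Hautus

/-- noiseless case: informativity for controllability / stabilizability. -/
theorem noiseless_informative_controllability_stabilizability (n m T : ℕ)
    (B : Matrix (Fin n) (Fin m) ℝ)
    (U : Matrix (Fin m) (Fin T) ℝ) (X : Matrix (Fin n) (Fin (T + 1)) ℝ)
    (hne : ∃ A : Matrix (Fin n) (Fin n) ℝ, Xplus X = A * Xminus X + B * U) :
    ((∀ A : Matrix (Fin n) (Fin n) ℝ, Xplus X = A * Xminus X + B * U → ∀ lam : ℂ,
        (fromCols (cx A - lam • 1) (cx B)).rank = n) ↔
      ∀ lam : ℂ, (fromCols (cx (Xplus X) - lam • cx (Xminus X)) (cx B)).rank = n)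
    ∧
    ((∀ A : Matrix (Fin n) (Fin n) ℝ, Xplus X = A * Xminus X + B * U →
        ∀ lam : ℂ, 1 ≤ ‖lam‖ →
        (fromCols (cx A - lam • 1) (cx B)).rank = n) ↔
      ∀ lam : ℂ, 1 ≤ ‖lam‖ →
        (fromCols (cx (Xplus X) - lam • cx (Xminus X)) (cx B)).rank = n) := by
  obtain ⟨A, hA⟩ := hne
  exact ⟨by simpa using forall_consistent_rank_fromCols_iff hA Set.univ,
    by simpa using forall_consistent_rank_fromCols_iff hA (Set.Ici 1)⟩
end

section
/- Let P ∈ ℝ^{n×r}, Q ∈ ℝ^{ℓ×n}, R ∈ ℝ^{ℓ×r}, B ∈ ℝ^{n×m}, C ∈ ℝ^{p×n}, D ∈ ℝ^{p×m}, and assume C⁻¹(im D) ⊆ im P. Let 𝒥* ⊆ ℝ^r be a subspace that satisfies inclusion (13) and contains every subspace of ℝ^r satisfying inclusion (13). Then for every A ∈ 𝒜 := { A : R = Q A P } and every subspace 𝒱 ⊆ ℝ^n that is output-nulling controlled invariant for (A,B,C,D), one has 𝒱 ⊆ P(𝒥*), where P(𝒥*) is the image of 𝒥* under P. In particular, the weakly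 unobservable subspace 𝒱(A,B,C,D) (the largest output-nulling controlled invariant subspace) is contained in P(𝒥*) for every A ∈ 𝒜. -/
open Matrix

/-- A subspace 𝒱 ⊆ ℝⁿ is output-nulling controlled invariant for (A,B,C,D). -/
def OutputNulling {n m p : ℕ} (A : Matrix (Fin n) (Fin n) ℝ) (B : Matrix (Fin n) (Fin m) ℝ)
    (C : Matrix (Fin p) (Fin n) ℝ) (D : Matrix (Fin p) (Fin m) ℝ)
    (V : Submodule ℝ (Fin n → ℝ)) : Prop :=
  ∀ v ∈ V, ∃ u : Fin m → ℝ, A.mulVec v + B.mulVec u ∈ V ∧ C.mulVec v + D.mulVec u = 0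

/-- A subspace 𝒥 ⊆ ℝʳ satisfies inclusion (13). -/
def Incl13 {n r l m p : ℕ} (P : Matrix (Fin n) (Fin r) ℝ) (Q : Matrix (Fin l) (Fin n) ℝ)
    (R : Matrix (Fin l) (Fin r) ℝ) (B : Matrix (Fin n) (Fin m) ℝ)
    (C : Matrix (Fin p) (Fin n) ℝ) (D : Matrix (Fin p) (Fin m) ℝ)
    (J : Submodule ℝ (Fin r → ℝ)) : Prop :=
  ∀ v ∈ J, ∃ η : Fin m → ℝ,
    R.mulVec v + (Q * B).mulVec η ∈ Submodule.map (Q * P).mulVecLin J ∧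
    (C * P).mulVec v + D.mulVec η = 0

/-- every output-nulling controlled invariant subspace of any (A,B,C,D)
with A ∈ 𝒜 is contained in P(𝒥*). -/
theorem output_nulling_subset_PJstar (n r l m p : ℕ)
    (P : Matrix (Fin n) (Fin r) ℝ) (Q : Matrix (Fin l) (Fin n) ℝ)
    (R : Matrix (Fin l) (Fin r) ℝ)
    (B : Matrix (Fin n) (Fin m) ℝ) (C : Matrix (Fin p) (Fin n) ℝ)
    (D : Matrix (Fin p) (Fin m) ℝ)
    (hCD : (LinearMap.range D.mulVecLin).comap C.mulVecLin ≤ LinearMap.range P.mulVecLin)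
    (Jstar : Submodule ℝ (Fin r → ℝ))
    (hJ : Incl13 P Q R B C D Jstar)
    (hJmax : ∀ J : Submodule ℝ (Fin r → ℝ), Incl13 P Q R B C D J → J ≤ Jstar) :
    ∀ A : Matrix (Fin n) (Fin n) ℝ, R = Q * A * P →
      ∀ V : Submodule ℝ (Fin n → ℝ), OutputNulling A B C D V →
        V ≤ Submodule.map P.mulVecLin Jstar := by
  intro A hA V hV
  -- V ⊆ range P
  have hVP : ∀ x ∈ V, ∃ y, P.mulVec y = x := by
    intro x hx
    obtain ⟨u, -, hu⟩ := hV x hx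
    have : x ∈ (LinearMap.range D.mulVecLin).comap C.mulVecLin := by
      refine ⟨-u, ?_⟩
      show D.mulVec (-u) = C.mulVec x
      rw [Matrix.mulVec_neg]
      exact (eq_neg_of_add_eq_zero_left hu).symm
    obtain ⟨y, hy⟩ := hCD this
    exact ⟨y, hy⟩
  -- the preimage subspace
  set J : Submodule ℝ (Fin r → ℝ) := V.comap P.mulVecLin with hJdef
  have hJ13 : Incl13 P Q R B C D J := by
    intro v hv
    have hPv : P.mulVec v ∈ V := hv
    obtain ⟨u, hmem, hz⟩ := hV (P.mulVec v) hPv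
    refine ⟨u, ?_, ?_⟩
    · obtain ⟨y, hy⟩ := hVP _ hmem
      refine ⟨y, ?_, ?_⟩
      · show P.mulVec y ∈ V
        rw [hy]; exact hmem
      · show (Q * P).mulVec y = R.mulVec v + (Q * B).mulVec u
        rw [← Matrix.mulVec_mulVec, hy, hA]
        simp [Matrix.mulVec_add, Matrix.mulVec_mulVec, Matrix.mul_assoc]
    · show (C * P).mulVec v + D.mulVec u = 0
      rw [← Matrix.mulVec_mulVec]
      exact hz
  have hle : J ≤ Jstar := hJmax J hJ13
  intro x hx
  obtain ⟨y, hy⟩ := hVP x hx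
  refine ⟨y, hle ?_, hy⟩
  show P.mulVec y ∈ V
  rw [hy]; exact hx
end

section
/- Let P ∈ ℝ^{n×r}, Q ∈ ℝ^{ℓ×n}, R ∈ ℝ^{ℓ×r}, B ∈ ℝ^{n×m}, C ∈ ℝ^{p×n}, D ∈ ℝ^{p×m}; assume C⁻¹(im D) ⊆ im P and that 𝒜 := { A : R = Q A P } is nonempty. Let 𝒥* ⊆ ℝ^r be a subspace that satisfies inclusion (13) and contains every subspace of ℝ^r satisfying inclusion (13). Then there exists Ā ∈ 𝒜 such that P(𝒥*) is output-nulling controlled invariant for (Ā,B,C,D); in particular, P(𝒥*) ⊆ 𝒱(Ā,B,C,D), the largest output-nulling controlled invariant subspace of (Ā,B,C,D). -/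
/-!
Write R = Q A₀ P. For v ∈ 𝒥*, inclusion (13) says that A₀ P v + B η lies in P(𝒥*) up to an
element k of ker Q, with C P v + D η = 0. Over a field the pair (η, k) can be chosen linearly in
x = P v ∈ P(𝒥*), and x ↦ k extends to a linear map ℝⁿ → ker Q. Subtracting this correction from
A₀ keeps Q Ā = Q A₀, and makes P(𝒥*) output-nulling controlled invariant for (Ā, B, C, D).
-/

open Matrix

theorem Submodule.exists_linearMap_forall_add_mem {K V W N : Type*} [DivisionRing K]
    [AddCommGroup V] [Module K V] [AddCommGroup W] [Module K W] [AddCommGroup N] [Module K N]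
    (f : V →ₗ[K] N) (g : W →ₗ[K] N) (U : Submodule K V) (T : Submodule K N)
    (h : ∀ x ∈ U, ∃ w, f x + g w ∈ T) :
    ∃ φ : U →ₗ[K] W, ∀ x : U, f x + g (φ x) ∈ T := by
  let b := Module.Basis.ofVectorSpace K U
  choose w hw using fun i => h (b i) (b i).2
  refine ⟨b.constr ℕ w, fun x => ?_⟩
  have hspan : (⊤ : Submodule K U) ≤ T.comap (f ∘ₗ U.subtype + g ∘ₗ b.constr ℕ w) := by
    rw [← b.span_eq, Submodule.span_le]
    rintro _ ⟨i, rfl⟩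
    simpa using hw i
  exact hspan Submodule.mem_top

def OutputNullingModulo {n m p : ℕ} (A : Matrix (Fin n) (Fin n) ℝ) (B : Matrix (Fin n) (Fin m) ℝ)
    (C : Matrix (Fin p) (Fin n) ℝ) (D : Matrix (Fin p) (Fin m) ℝ)
    (V W : Submodule ℝ (Fin n → ℝ)) : Prop :=
  ∀ v ∈ V, ∃ u : Fin m → ℝ, A *ᵥ v + B *ᵥ u ∈ V ⊔ W ∧ C *ᵥ v + D *ᵥ u = 0

theorem Incl13.outputNullingModulo_map {n r l m p : ℕ} {P : Matrix (Fin n) (Fin r) ℝ}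
    {Q : Matrix (Fin l) (Fin n) ℝ} {A : Matrix (Fin n) (Fin n) ℝ} {B : Matrix (Fin n) (Fin m) ℝ}
    {C : Matrix (Fin p) (Fin n) ℝ} {D : Matrix (Fin p) (Fin m) ℝ} {J : Submodule ℝ (Fin r → ℝ)}
    (hJ : Incl13 P Q (Q * A * P) B C D J) :
    OutputNullingModulo A B C D (J.map P.mulVecLin) (LinearMap.ker Q.mulVecLin) := by
  rintro _ ⟨v, hv, rfl⟩
  obtain ⟨η, ⟨w, hw, hQPw⟩, hnull⟩ := hJ v hv
  simp only [mulVecLin_apply, ← mulVec_mulVec] at hQPw hnull ⊢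
  refine ⟨η, Submodule.mem_sup.mpr ⟨P *ᵥ w, ⟨w, hw, rfl⟩, A *ᵥ P *ᵥ v + B *ᵥ η - P *ᵥ w, ?_,
    add_sub_cancel _ _⟩, hnull⟩
  simp [mulVec_sub, mulVec_add, hQPw]

theorem OutputNullingModulo.exists_outputNulling {n l m p : ℕ} {Q : Matrix (Fin l) (Fin n) ℝ}
    {A : Matrix (Fin n) (Fin n) ℝ} {B : Matrix (Fin n) (Fin m) ℝ} {C : Matrix (Fin p) (Fin n) ℝ}
    {D : Matrix (Fin p) (Fin m) ℝ} {V : Submodule ℝ (Fin n → ℝ)}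
    (hV : OutputNullingModulo A B C D V (LinearMap.ker Q.mulVecLin)) :
    ∃ Abar : Matrix (Fin n) (Fin n) ℝ, Q * Abar = Q * A ∧ OutputNulling Abar B C D V := by
  set K := LinearMap.ker Q.mulVecLin
  -- select `(u, k)` with `A v + B u - k ∈ V`, `k ∈ ker Q` and `C v + D u = 0`
  obtain ⟨φ, hφ⟩ := Submodule.exists_linearMap_forall_add_mem
    (A.mulVecLin.prod C.mulVecLin)
    ((B.mulVecLin.coprod (-K.subtype)).prod (D.mulVecLin ∘ₗ LinearMap.fst ℝ _ _)) V (V.prod ⊥)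
    (by
      intro v hv
      obtain ⟨u, hu, hnull⟩ := hV v hv
      obtain ⟨y, hy, k, hk, hyk⟩ := Submodule.mem_sup.mp hu
      refine ⟨(u, ⟨k, hk⟩), Submodule.mem_prod.mpr ⟨?_, ?_⟩⟩
      · have hAu : A *ᵥ v + (B *ᵥ u - k) = y := by
          rw [← add_sub_assoc, ← hyk, add_sub_cancel_right]
        simpa [← sub_eq_add_neg, hAu] using hy
      · simpa [add_assoc] using hnull)
  obtain ⟨κ, hκ⟩ := LinearMap.exists_extend (LinearMap.snd ℝ _ _ ∘ₗ φ)
  set M := LinearMap.toMatrix' (K.subtype ∘ₗ κ)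
  have hM : ∀ x, M *ᵥ x = κ x := LinearMap.toMatrix'_mulVec _
  have hQM : Q * M = 0 := mulVec_injective <| funext fun x => by
    rw [zero_mulVec, ← mulVec_mulVec, hM]
    exact (κ x).2
  refine ⟨A - M, by rw [Matrix.mul_sub, hQM, sub_zero], fun v hv => ?_⟩
  have hMv : M *ᵥ v = (φ ⟨v, hv⟩).2 := by
    rw [hM]; exact congrArg Subtype.val (LinearMap.congr_fun hκ ⟨v, hv⟩)
  obtain ⟨hmem, hnull⟩ := Submodule.mem_prod.mp (hφ ⟨v, hv⟩)
  refine ⟨(φ ⟨v, hv⟩).1, ?_, by simpa using hnull⟩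
  rw [sub_mulVec, hMv, sub_add_eq_add_sub, add_sub_assoc]
  simpa [sub_eq_add_neg] using hmem

theorem exists_A_PJstar_output_nulling_general (n r l m p : ℕ)
    (P : Matrix (Fin n) (Fin r) ℝ) (Q : Matrix (Fin l) (Fin n) ℝ)
    (R : Matrix (Fin l) (Fin r) ℝ)
    (B : Matrix (Fin n) (Fin m) ℝ) (C : Matrix (Fin p) (Fin n) ℝ)
    (D : Matrix (Fin p) (Fin m) ℝ)
    (hne : ∃ A : Matrix (Fin n) (Fin n) ℝ, R = Q * A * P)
    (Jstar : Submodule ℝ (Fin r → ℝ))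
    (hJ : Incl13 P Q R B C D Jstar) :
    ∃ Abar : Matrix (Fin n) (Fin n) ℝ, R = Q * Abar * P ∧
      OutputNulling Abar B C D (Submodule.map P.mulVecLin Jstar) := by
  obtain ⟨A, rfl⟩ := hne
  obtain ⟨Abar, hQ, hV⟩ := hJ.outputNullingModulo_map.exists_outputNulling
  exact ⟨Abar, by rw [hQ], hV⟩

/-- there exists Ā ∈ 𝒜 such that P(𝒥*) is output-nulling controlled
invariant for (Ā,B,C,D). -/
theorem exists_A_PJstar_output_nulling (n r l m p : ℕ)
    (P : Matrix (Fin n) (Fin r) ℝ) (Q : Matrix (Fin l) (Fin n) ℝ)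
    (R : Matrix (Fin l) (Fin r) ℝ)
    (B : Matrix (Fin n) (Fin m) ℝ) (C : Matrix (Fin p) (Fin n) ℝ)
    (D : Matrix (Fin p) (Fin m) ℝ)
    (hCD : (LinearMap.range D.mulVecLin).comap C.mulVecLin ≤ LinearMap.range P.mulVecLin)
    (hne : ∃ A : Matrix (Fin n) (Fin n) ℝ, R = Q * A * P)
    (Jstar : Submodule ℝ (Fin r → ℝ))
    (hJ : Incl13 P Q R B C D Jstar)
    (hJmax : ∀ J : Submodule ℝ (Fin r → ℝ), Incl13 P Q R B C D J → J ≤ Jstar) :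
    ∃ Abar : Matrix (Fin n) (Fin n) ℝ, R = Q * Abar * P ∧
      OutputNulling Abar B C D (Submodule.map P.mulVecLin Jstar) :=
  exists_A_PJstar_output_nulling_general n r l m p P Q R B C D hne Jstar hJ
end

section
/- Let P ∈ ℝ^{n×r}, Q ∈ ℝ^{ℓ×n}, R ∈ ℝ^{ℓ×r}, B ∈ ℝ^{n×m}, C ∈ ℝ^{p×n}, D ∈ ℝ^{p×m}; assume 𝒜 := { A : R = Q A P } is nonempty. Let 𝒥* ⊆ ℝ^r be a subspace that satisfies inclusion (13) and contains every subspace of ℝ^r satisfying inclusion (13). Then the system Σ(A,B,C,D) is strongly observable for all A ∈ 𝒜 if and only if C⁻¹(im D) ⊆ im P and 𝒥* ⊆ ker P. -/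
open Matrix

/-- State trajectory of the system x(t+1) = A x(t) + B u(t) from initial state x₀. -/
def stateTraj {n m : ℕ} (A : Matrix (Fin n) (Fin n) ℝ) (B : Matrix (Fin n) (Fin m) ℝ)
    (x₀ : Fin n → ℝ) (u : ℕ → Fin m → ℝ) : ℕ → Fin n → ℝ
  | 0 => x₀
  | t + 1 => A.mulVec (stateTraj A B x₀ u t) + B.mulVec (u t)

/-- Σ(A,B,C,D) is strongly observable. -/
def StronglyObservable {n m p : ℕ} (A : Matrix (Fin n) (Fin n) ℝ)
    (B : Matrix (Fin n) (Fin m) ℝ) (C : Matrix (Fin p) (Fin n) ℝ)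
    (D : Matrix (Fin p) (Fin m) ℝ) : Prop :=
  ∀ (x₀ : Fin n → ℝ) (u : ℕ → Fin m → ℝ),
    (∀ t : ℕ, C.mulVec (stateTraj A B x₀ u t) + D.mulVec (u t) = 0) → x₀ = 0

section Aux
variable {n m : ℕ} (A : Matrix (Fin n) (Fin n) ℝ) (B : Matrix (Fin n) (Fin m) ℝ)

lemma stateTraj_add (x y : Fin n → ℝ) (u w : ℕ → Fin m → ℝ) (t : ℕ) :
    stateTraj A B (x + y) (u + w) t = stateTraj A B x u t + stateTraj A B y w t := by
  induction t with
  | zero => rfl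
  | succ t ih =>
      show A.mulVec _ + B.mulVec _ = _
      rw [ih]
      show _ = (A.mulVec _ + B.mulVec (u t)) + (A.mulVec _ + B.mulVec (w t))
      rw [Matrix.mulVec_add]
      show _ + B.mulVec (u t + w t) = _
      rw [Matrix.mulVec_add]; abel

lemma stateTraj_smul (c : ℝ) (x : Fin n → ℝ) (u : ℕ → Fin m → ℝ) (t : ℕ) :
    stateTraj A B (c • x) (fun s => c • u s) t = c • stateTraj A B x u t := by
  induction t with
  | zero => rfl
  | succ t ih =>
      show A.mulVec _ + B.mulVec _ = _
      rw [ih]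
      show _ = c • (A.mulVec _ + B.mulVec (u t))
      rw [smul_add, Matrix.mulVec_smul, Matrix.mulVec_smul]

lemma stateTraj_zero (t : ℕ) : stateTraj A B 0 (fun _ => 0) t = 0 := by
  induction t with
  | zero => rfl
  | succ t ih =>
      show A.mulVec _ + B.mulVec _ = _
      rw [ih, Matrix.mulVec_zero, Matrix.mulVec_zero, add_zero]

lemma stateTraj_shift (x : Fin n → ℝ) (u : ℕ → Fin m → ℝ) (t : ℕ) :
    stateTraj A B (A.mulVec x + B.mulVec (u 0)) (fun s => u (s + 1)) t
      = stateTraj A B x u (t + 1) := by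
  induction t with
  | zero => rfl
  | succ t ih =>
      show A.mulVec _ + B.mulVec _ = _
      rw [ih]; rfl

end Aux

def nullSpace {n m p : ℕ} (A : Matrix (Fin n) (Fin n) ℝ) (B : Matrix (Fin n) (Fin m) ℝ)
    (C : Matrix (Fin p) (Fin n) ℝ) (D : Matrix (Fin p) (Fin m) ℝ) :
    Submodule ℝ (Fin n → ℝ) where
  carrier := {x | ∃ u : ℕ → Fin m → ℝ,
      ∀ t, C.mulVec (stateTraj A B x u t) + D.mulVec (u t) = 0}
  zero_mem' := ⟨fun _ => 0, fun t => by
    rw [stateTraj_zero, Matrix.mulVec_zero, Matrix.mulVec_zero, add_zero]⟩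
  add_mem' := by
    rintro a b ⟨u, hu⟩ ⟨w, hw⟩
    refine ⟨u + w, fun t => ?_⟩
    rw [stateTraj_add, Matrix.mulVec_add]
    show _ + D.mulVec (u t + w t) = 0
    rw [Matrix.mulVec_add]
    calc C.mulVec (stateTraj A B a u t) + C.mulVec (stateTraj A B b w t)
          + (D.mulVec (u t) + D.mulVec (w t))
        = (C.mulVec (stateTraj A B a u t) + D.mulVec (u t))
          + (C.mulVec (stateTraj A B b w t) + D.mulVec (w t)) := by abel
      _ = 0 := by rw [hu t, hw t, add_zero]
  smul_mem' := by
    rintro c a ⟨u, hu⟩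
    refine ⟨fun s => c • u s, fun t => ?_⟩
    rw [stateTraj_smul, Matrix.mulVec_smul, Matrix.mulVec_smul, ← smul_add, hu t, smul_zero]

lemma mem_nullSpace {n m p : ℕ} {A : Matrix (Fin n) (Fin n) ℝ} {B : Matrix (Fin n) (Fin m) ℝ}
    {C : Matrix (Fin p) (Fin n) ℝ} {D : Matrix (Fin p) (Fin m) ℝ} {x : Fin n → ℝ} :
    x ∈ nullSpace A B C D ↔ ∃ u : ℕ → Fin m → ℝ,
      ∀ t, C.mulVec (stateTraj A B x u t) + D.mulVec (u t) = 0 := Iff.rfl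

lemma matrix_eq_of_mulVec {k n : ℕ} {M N : Matrix (Fin k) (Fin n) ℝ}
    (h : ∀ v, M.mulVec v = N.mulVec v) : M = N := by
  exact Matrix.toLin'.injective (LinearMap.ext fun v => by
    rw [Matrix.toLin'_apply, Matrix.toLin'_apply]; exact h v)

lemma toMatrix'_mulVec {n k : ℕ} (f : (Fin n → ℝ) →ₗ[ℝ] (Fin k → ℝ)) (x : Fin n → ℝ) :
    (LinearMap.toMatrix' f).mulVec x = f x := by
  rw [← Matrix.toLin'_apply, Matrix.toLin'_toMatrix']

/-- a functional vanishing on a submodule and equal to 1 on a point outside it -/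
lemma exists_dual_one {k : ℕ} (U : Submodule ℝ (Fin k → ℝ)) (x : Fin k → ℝ) (hx : x ∉ U) :
    ∃ f : (Fin k → ℝ) →ₗ[ℝ] ℝ, f x = 1 ∧ ∀ z ∈ U, f z = 0 := by
  have hne : U.mkQ x ≠ 0 := by
    rw [Submodule.mkQ_apply, Ne, Submodule.Quotient.mk_eq_zero]; exact hx
  obtain ⟨φ, hφ⟩ : ∃ φ : Module.Dual ℝ ((Fin k → ℝ) ⧸ U), φ (U.mkQ x) ≠ 0 := by
    by_contra h
    push_neg at h
    exact hne ((Module.forall_dual_apply_eq_zero_iff ℝ _).mp h)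
  refine ⟨(φ (U.mkQ x))⁻¹ • (φ ∘ₗ U.mkQ), ?_, ?_⟩
  · simp only [LinearMap.smul_apply, LinearMap.coe_comp, Function.comp_apply, smul_eq_mul]
    exact inv_mul_cancel₀ hφ
  · intro z hz
    simp only [LinearMap.smul_apply, LinearMap.coe_comp, Function.comp_apply, smul_eq_mul]
    have hz0 : U.mkQ z = 0 := (Submodule.Quotient.mk_eq_zero U).mpr hz
    rw [hz0, map_zero, mul_zero]

def selSub {n l m p : ℕ} (A₀ : Matrix (Fin n) (Fin n) ℝ) (Q : Matrix (Fin l) (Fin n) ℝ)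
    (B : Matrix (Fin n) (Fin m) ℝ) (C : Matrix (Fin p) (Fin n) ℝ)
    (D : Matrix (Fin p) (Fin m) ℝ) (V : Submodule ℝ (Fin n → ℝ)) :
    Submodule ℝ ((Fin n → ℝ) × (Fin m → ℝ) × (Fin n → ℝ)) where
  carrier := {w | w.1 ∈ V ∧ w.2.2 ∈ V ∧
      Q.mulVec (A₀.mulVec w.1) + Q.mulVec (B.mulVec w.2.1) = Q.mulVec w.2.2 ∧
      C.mulVec w.1 + D.mulVec w.2.1 = 0}
  zero_mem' := by
    refine ⟨V.zero_mem, V.zero_mem, ?_, ?_⟩ <;>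
      simp [Matrix.mulVec_zero]
  add_mem' := by
    rintro a b ⟨ha1, ha2, ha3, ha4⟩ ⟨hb1, hb2, hb3, hb4⟩
    refine ⟨V.add_mem ha1 hb1, V.add_mem ha2 hb2, ?_, ?_⟩
    · show Q.mulVec (A₀.mulVec (a.1 + b.1)) + Q.mulVec (B.mulVec (a.2.1 + b.2.1))
        = Q.mulVec (a.2.2 + b.2.2)
      simp only [Matrix.mulVec_add]
      rw [← ha3, ← hb3]; abel
    · show C.mulVec (a.1 + b.1) + D.mulVec (a.2.1 + b.2.1) = 0
      simp only [Matrix.mulVec_add]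
      calc C.mulVec a.1 + C.mulVec b.1 + (D.mulVec a.2.1 + D.mulVec b.2.1)
          = (C.mulVec a.1 + D.mulVec a.2.1) + (C.mulVec b.1 + D.mulVec b.2.1) := by abel
        _ = 0 := by rw [ha4, hb4, add_zero]
  smul_mem' := by
    rintro c a ⟨ha1, ha2, ha3, ha4⟩
    refine ⟨V.smul_mem c ha1, V.smul_mem c ha2, ?_, ?_⟩
    · show Q.mulVec (A₀.mulVec (c • a.1)) + Q.mulVec (B.mulVec (c • a.2.1))
        = Q.mulVec (c • a.2.2)
      simp only [Matrix.mulVec_smul]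
      rw [← smul_add, ha3]
    · show C.mulVec (c • a.1) + D.mulVec (c • a.2.1) = 0
      simp only [Matrix.mulVec_smul]
      rw [← smul_add, ha4, smul_zero]

lemma mem_selSub {n l m p : ℕ} {A₀ : Matrix (Fin n) (Fin n) ℝ} {Q : Matrix (Fin l) (Fin n) ℝ}
    {B : Matrix (Fin n) (Fin m) ℝ} {C : Matrix (Fin p) (Fin n) ℝ}
    {D : Matrix (Fin p) (Fin m) ℝ} {V : Submodule ℝ (Fin n → ℝ)}
    {w : (Fin n → ℝ) × (Fin m → ℝ) × (Fin n → ℝ)} :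
    w ∈ selSub A₀ Q B C D V ↔ (w.1 ∈ V ∧ w.2.2 ∈ V ∧
      Q.mulVec (A₀.mulVec w.1) + Q.mulVec (B.mulVec w.2.1) = Q.mulVec w.2.2 ∧
      C.mulVec w.1 + D.mulVec w.2.1 = 0) := Iff.rfl

/-- geometric characterization of strong observability for all A ∈ 𝒜. -/
theorem strongly_observable_all_iff_geometric (n r l m p : ℕ)
    (P : Matrix (Fin n) (Fin r) ℝ) (Q : Matrix (Fin l) (Fin n) ℝ)
    (R : Matrix (Fin l) (Fin r) ℝ)
    (B : Matrix (Fin n) (Fin m) ℝ) (C : Matrix (Fin p) (Fin n) ℝ)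
    (D : Matrix (Fin p) (Fin m) ℝ)
    (hne : ∃ A : Matrix (Fin n) (Fin n) ℝ, R = Q * A * P)
    (Jstar : Submodule ℝ (Fin r → ℝ))
    (hJ : Incl13 P Q R B C D Jstar)
    (hJmax : ∀ J : Submodule ℝ (Fin r → ℝ), Incl13 P Q R B C D J → J ≤ Jstar) :
    (∀ A : Matrix (Fin n) (Fin n) ℝ, R = Q * A * P → StronglyObservable A B C D) ↔
      ((LinearMap.range D.mulVecLin).comap C.mulVecLin ≤ LinearMap.range P.mulVecLin ∧
        Jstar ≤ LinearMap.ker P.mulVecLin) := by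
  constructor
  · intro hSO
    obtain ⟨A₀, hA₀⟩ := hne
    constructor
    · -- C⁻¹(im D) ⊆ im P

        intro x₀ hx₀
        by_contra hx
        obtain ⟨w, hw⟩ := hx₀
        obtain ⟨f, hf1, hf0⟩ := exists_dual_one (LinearMap.range P.mulVecLin) x₀ hx
        set η : Fin m → ℝ := -w with hηdef
        set z : Fin n → ℝ := -(A₀.mulVec x₀ + B.mulVec η) with hzdef
        set δ : (Fin n → ℝ) →ₗ[ℝ] (Fin n → ℝ) := f.smulRight z with hδdef
        set Δm : Matrix (Fin n) (Fin n) ℝ := LinearMap.toMatrix' δ with hΔdef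
        have hΔv : ∀ x, Δm.mulVec x = f x • z := fun x => toMatrix'_mulVec δ x
        have hQΔP : Q * Δm * P = 0 := by
          apply matrix_eq_of_mulVec
          intro v
          rw [Matrix.zero_mulVec, ← Matrix.mulVec_mulVec, ← Matrix.mulVec_mulVec, hΔv,
            hf0 (P *ᵥ v) ⟨v, rfl⟩, zero_smul, Matrix.mulVec_zero]
        have hA : R = Q * (A₀ + Δm) * P := by
          rw [Matrix.mul_add, Matrix.add_mul, ← hA₀, hQΔP, add_zero]
        -- the killing input
        set u : ℕ → Fin m → ℝ := fun t => if t = 0 then η else 0 with hudef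
        have hs1 : stateTraj (A₀ + Δm) B x₀ u 1 = 0 := by
          show (A₀ + Δm).mulVec x₀ + B.mulVec (u 0) = 0
          rw [Matrix.add_mulVec, hΔv, hf1, one_smul, hzdef]
          show A₀.mulVec x₀ + -(A₀.mulVec x₀ + B.mulVec η) + B.mulVec η = 0
          abel
        have hsn : ∀ t, stateTraj (A₀ + Δm) B x₀ u (t + 1) = 0 := by
          intro t
          induction t with
          | zero => exact hs1
          | succ t ih =>
              show (A₀ + Δm).mulVec _ + B.mulVec (u (t + 1)) = 0
              rw [ih, Matrix.mulVec_zero]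
              have : u (t + 1) = 0 := if_neg (Nat.succ_ne_zero t)
              rw [this, Matrix.mulVec_zero, add_zero]
        have hout : ∀ t, C.mulVec (stateTraj (A₀ + Δm) B x₀ u t) + D.mulVec (u t) = 0 := by
          intro t
          match t with
          | 0 =>
              show C.mulVec x₀ + D.mulVec (u 0) = 0
              have : u 0 = η := if_pos rfl
              rw [this, hηdef, Matrix.mulVec_neg]
              have hCx : C.mulVec x₀ = D.mulVec w := by
                simpa only [Matrix.mulVecLin_apply] using hw.symm
              rw [hCx, add_neg_cancel]
          | t + 1 =>
              rw [hsn t, Matrix.mulVec_zero, zero_add]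
              have : u (t + 1) = 0 := if_neg (Nat.succ_ne_zero t)
              rw [this, Matrix.mulVec_zero]
        have : x₀ = 0 := hSO (A₀ + Δm) hA x₀ u hout
        exact hx (this ▸ Submodule.zero_mem _)
    · -- Jstar ⊆ ker P

        intro v₀ hv₀
        set V : Submodule ℝ (Fin n → ℝ) := Submodule.map P.mulVecLin Jstar with hVdef
        set T : Submodule ℝ ((Fin n → ℝ) × (Fin m → ℝ) × (Fin n → ℝ)) := selSub A₀ Q B C D V
          with hTdef
        -- every x ∈ V extends to a triple in T
        have hsel : ∀ x ∈ V, ∃ η y, (x, η, y) ∈ T := by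
          rintro x ⟨v, hvJ, hPv⟩
          obtain ⟨η, hmem, hout⟩ := hJ v hvJ
          obtain ⟨v', hv'J, hv'eq⟩ := hmem
          refine ⟨η, P.mulVec v', ?_⟩
          rw [hTdef, mem_selSub]
          refine ⟨⟨v, hvJ, hPv⟩, ⟨v', hv'J, rfl⟩, ?_, ?_⟩
          · show Q.mulVec (A₀.mulVec x) + Q.mulVec (B.mulVec η) = Q.mulVec (P.mulVec v')
            have h1 : (Q * P).mulVecLin v' = R.mulVec v + (Q * B).mulVec η := hv'eq
            rw [Matrix.mulVecLin_apply, ← Matrix.mulVec_mulVec] at h1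
            rw [h1, hA₀, ← Matrix.mulVec_mulVec (M := Q * A₀),
              ← Matrix.mulVec_mulVec (M := Q) (N := A₀), ← Matrix.mulVec_mulVec (M := Q) (N := B)]
            have hx : P.mulVec v = x := hPv
            rw [hx]
          · show C.mulVec x + D.mulVec η = 0
            have hx : P.mulVec v = x := hPv
            rw [← hx, Matrix.mulVec_mulVec]
            exact hout
        -- linear selection
        set πV : T →ₗ[ℝ] V := LinearMap.codRestrict V
          ((LinearMap.fst ℝ (Fin n → ℝ) ((Fin m → ℝ) × (Fin n → ℝ))).comp T.subtype)
          (fun w => w.2.1) with hπdef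
        have hπsur : LinearMap.range πV = ⊤ := by
          rw [LinearMap.range_eq_top]
          rintro ⟨x, hx⟩
          obtain ⟨η, y, hT⟩ := hsel x hx
          exact ⟨⟨(x, η, y), hT⟩, rfl⟩
        obtain ⟨σ, hσ⟩ := πV.exists_rightInverse_of_surjective hπsur
        set sel : V →ₗ[ℝ] ((Fin n → ℝ) × (Fin m → ℝ) × (Fin n → ℝ)) := T.subtype.comp σ
          with hseldef
        have hsel1 : ∀ x : V, (sel x).1 = (x : Fin n → ℝ) := by
          intro x
          have := LinearMap.congr_fun hσ x
          exact congrArg Subtype.val this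
        have hselT : ∀ x : V, sel x ∈ T := fun x => (σ x).2
        set E : V →ₗ[ℝ] (Fin m → ℝ) :=
          (LinearMap.fst ℝ (Fin m → ℝ) (Fin n → ℝ)).comp
            ((LinearMap.snd ℝ (Fin n → ℝ) ((Fin m → ℝ) × (Fin n → ℝ))).comp sel) with hEdef
        set Fm : V →ₗ[ℝ] (Fin n → ℝ) :=
          (LinearMap.snd ℝ (Fin m → ℝ) (Fin n → ℝ)).comp
            ((LinearMap.snd ℝ (Fin n → ℝ) ((Fin m → ℝ) × (Fin n → ℝ))).comp sel) with hFdef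
        have hFV : ∀ x : V, Fm x ∈ V := fun x => (hselT x).2.1
        have hQx : ∀ x : V, Q.mulVec (A₀.mulVec (x : Fin n → ℝ)) + Q.mulVec (B.mulVec (E x))
            = Q.mulVec (Fm x) := by
          intro x
          have h := (hselT x).2.2.1
          rwa [hsel1 x] at h
        have hCx : ∀ x : V, C.mulVec (x : Fin n → ℝ) + D.mulVec (E x) = 0 := by
          intro x
          have h := (hselT x).2.2.2
          rwa [hsel1 x] at h
        -- projection onto V
        obtain ⟨W, hW⟩ := Submodule.exists_isCompl V
        set prV : (Fin n → ℝ) →ₗ[ℝ] V := V.linearProjOfIsCompl W hW with hprdef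
        have hpr : ∀ x : V, prV (x : Fin n → ℝ) = x :=
          fun x => Submodule.linearProjOfIsCompl_apply_left hW x
        -- the perturbation
        set G : V →ₗ[ℝ] (Fin n → ℝ) :=
          Fm - B.mulVecLin.comp E - A₀.mulVecLin.comp V.subtype with hGdef
        have hGx : ∀ x : V, G x = Fm x - B.mulVec (E x) - A₀.mulVec (x : Fin n → ℝ) := by
          intro x; rfl
        have hQG : ∀ x : V, Q.mulVec (G x) = 0 := by
          intro x
          rw [hGx, Matrix.mulVec_sub, Matrix.mulVec_sub, ← hQx x]
          abel
        set δ : (Fin n → ℝ) →ₗ[ℝ] (Fin n → ℝ) := G.comp prV with hδdef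
        set Δm : Matrix (Fin n) (Fin n) ℝ := LinearMap.toMatrix' δ with hΔdef
        have hΔv : ∀ x, Δm.mulVec x = G (prV x) := fun x => toMatrix'_mulVec δ x
        have hQΔP : Q * Δm * P = 0 := by
          apply matrix_eq_of_mulVec
          intro v
          rw [Matrix.zero_mulVec, ← Matrix.mulVec_mulVec, ← Matrix.mulVec_mulVec, hΔv, hQG]
        have hA : R = Q * (A₀ + Δm) * P := by
          rw [Matrix.mul_add, Matrix.add_mul, ← hA₀, hQΔP, add_zero]
        -- invariance
        have hstep : ∀ x : V, (A₀ + Δm).mulVec (x : Fin n → ℝ) + B.mulVec (E x) = Fm x := by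
          intro x
          rw [Matrix.add_mulVec, hΔv, hpr, hGx]
          abel
        -- the trajectory
        set ξ : ℕ → V := fun t => Nat.rec ⟨P.mulVecLin v₀, ⟨v₀, hv₀, rfl⟩⟩
          (fun _ xt => ⟨Fm xt, hFV xt⟩) t with hξdef
        set u : ℕ → Fin m → ℝ := fun t => E (ξ t) with hudef
        have hξ0 : (ξ 0 : Fin n → ℝ) = P.mulVec v₀ := rfl
        have hξs : ∀ t, (ξ (t + 1) : Fin n → ℝ) = Fm (ξ t) := fun t => rfl
        have htraj : ∀ t, stateTraj (A₀ + Δm) B (P.mulVec v₀) u t = (ξ t : Fin n → ℝ) := by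
          intro t
          induction t with
          | zero => rfl
          | succ t ih =>
              show (A₀ + Δm).mulVec _ + B.mulVec (u t) = _
              rw [ih, hξs t]
              exact hstep (ξ t)
        have hout : ∀ t, C.mulVec (stateTraj (A₀ + Δm) B (P.mulVec v₀) u t) + D.mulVec (u t) = 0 := by
          intro t
          rw [htraj t]
          exact hCx (ξ t)
        have h0 : P.mulVec v₀ = 0 := hSO (A₀ + Δm) hA (P.mulVec v₀) u hout
        exact h0
  · rintro ⟨hCD, hJP⟩ A hA
    intro x₀ u hu
    set 𝒱 := nullSpace A B C D with h𝒱
    have hx₀ : x₀ ∈ 𝒱 := ⟨u, hu⟩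
    -- one-step property of 𝒱
    have hVD : ∀ x ∈ 𝒱, ∃ η : Fin m → ℝ,
        C.mulVec x + D.mulVec η = 0 ∧ A.mulVec x + B.mulVec η ∈ 𝒱 := by
      rintro x ⟨w, hw⟩
      exact ⟨w 0, hw 0, ⟨fun s => w (s + 1), fun t => by
        rw [stateTraj_shift]; exact hw (t + 1)⟩⟩
    -- 𝒱 ⊆ im P
    have hVP : 𝒱 ≤ LinearMap.range P.mulVecLin := by
      intro x hx
      obtain ⟨η, hη, -⟩ := hVD x hx
      refine hCD ?_
      refine ⟨-η, ?_⟩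
      simp only [Matrix.mulVecLin_apply, Matrix.mulVec_neg]
      exact (neg_eq_of_add_eq_zero_right ((add_comm _ _).trans hη)).symm ▸ rfl
    -- J := P⁻¹𝒱 satisfies (13)
    set J : Submodule ℝ (Fin r → ℝ) := 𝒱.comap P.mulVecLin with hJdef
    have hIncl : Incl13 P Q R B C D J := by
      intro v hv
      have hvV : P.mulVec v ∈ 𝒱 := hv
      obtain ⟨η, hη1, hη2⟩ := hVD _ hvV
      obtain ⟨v', hv'⟩ := hVP hη2
      refine ⟨η, ⟨v', ?_, ?_⟩, ?_⟩
      · show P.mulVecLin v' ∈ 𝒱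
        rw [hv']; exact hη2
      · show (Q * P).mulVecLin v' = _
        simp only [Matrix.mulVecLin_apply] at hv' ⊢
        rw [hA, ← Matrix.mulVec_mulVec (M := Q * A), ← Matrix.mulVec_mulVec (M := Q) (N := A),
          ← Matrix.mulVec_mulVec (M := Q) (N := B), ← Matrix.mulVec_add, ← hv',
          Matrix.mulVec_mulVec]
      · rw [← Matrix.mulVec_mulVec]; exact hη1
    have hJle : J ≤ Jstar := hJmax J hIncl
    obtain ⟨v, hvP⟩ := hVP hx₀
    have hvJ : v ∈ J := by
      show P.mulVecLin v ∈ 𝒱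
      rw [hvP]; exact hx₀
    have : P.mulVecLin v = 0 := hJP (hJle hvJ)
    rw [← hvP, this]
end

section
/- Let P ∈ ℝ^{n×r}, Q ∈ ℝ^{ℓ×n}, R ∈ ℝ^{ℓ×r}, C ∈ ℝ^{p×n}; assume 𝒜 := { A : R = Q A P } is nonempty. Let 𝓛* ⊆ ℝ^r be a subspace such that R(𝓛*) ⊆ QP(𝓛*) and CP(𝓛*) = {0}, and such that 𝓛* contains every subspace 𝓛 ⊆ ℝ^r with R(𝓛) ⊆ QP(𝓛) and CP(𝓛) = {0}. Then the pair (C,A) is observable for all A ∈ 𝒜 (i.e., for every A ∈ 𝒜 and every x₀ ∈ ℝ^n, C A^t x₀ = 0 for all t ∈ ℕ implies x₀ = 0) if and only if ker C ⊆ im P and 𝓛* ⊆ ker P. -/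
/-!
The unobservable subspace of `(C, A)` is the largest `A`-invariant subspace of `ker C`, so `(C, A)`
is observable iff no nonzero `A`-invariant subspace lies in `ker C`. Given `A₀ ∈ 𝒜`, every
`A₀ + D` with `Q D P = 0` is again in `𝒜`. If some `x ∈ ker C` lies outside `im P`, choose `D`
vanishing on `im P` with `(A₀ + D) x = 0`. Since `A₀ (P 𝓛*) ⊆ P 𝓛* + ker Q`, one can choose `D`
with values in `ker Q` that makes `P 𝓛* ⊆ ker C` invariant. Conversely, if `ker C ⊆ im P`, the
preimage under `P` of the unobservable subspace of any `A ∈ 𝒜` satisfies both conditions defining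
`𝓛*`, so it lies in `𝓛* ⊆ ker P`, which forces the unobservable subspace to vanish.
-/

open Matrix LinearMap Submodule

section Unobservable

variable {R M N : Type*} [Semiring R] [AddCommMonoid M] [Module R M] [AddCommMonoid N] [Module R N]

def unobservableSubspace (C : M →ₗ[R] N) (A : Module.End R M) : Submodule R M :=
  ⨅ t : ℕ, ker (C ∘ₗ A ^ t)

variable {C : M →ₗ[R] N} {A : Module.End R M}

theorem mem_unobservableSubspace {x : M} :
    x ∈ unobservableSubspace C A ↔ ∀ t : ℕ, C ((A ^ t) x) = 0 := by
  simp [unobservableSubspace]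

theorem unobservableSubspace_le_ker : unobservableSubspace C A ≤ ker C := fun x hx => by
  simpa using mem_unobservableSubspace.mp hx 0

theorem unobservableSubspace_mem_invtSubmodule :
    unobservableSubspace C A ∈ A.invtSubmodule := fun x hx =>
  mem_unobservableSubspace.mpr fun t => by
    simpa [pow_succ] using mem_unobservableSubspace.mp hx (t + 1)

theorem le_unobservableSubspace {W : Submodule R M} (hA : W ∈ A.invtSubmodule)
    (hC : W ≤ ker C) : W ≤ unobservableSubspace C A := fun x hx =>
  mem_unobservableSubspace.mpr fun t => by
    rw [Module.End.coe_pow]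
    exact hC (((Module.End.mem_invtSubmodule_iff_mapsTo A).mp hA).iterate t hx)

end Unobservable

theorem LinearMap.exists_comp_eq_of_range_le {R M N P : Type*} [Ring R] [AddCommGroup M]
    [Module R M] [AddCommGroup N] [Module R N] [AddCommGroup P] [Module R P]
    [Module.Projective R M] {f : M →ₗ[R] P} {g : N →ₗ[R] P} (h : range f ≤ range g) :
    ∃ φ : M →ₗ[R] N, g ∘ₗ φ = f := by
  obtain ⟨φ, hφ⟩ := Module.projective_lifting_property g.rangeRestrict
    (f.codRestrict (range g) fun x => h (mem_range_self f x)) g.surjective_rangeRestrict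
  exact ⟨φ, by ext x; exact congr(($hφ x : P))⟩

theorem Module.End.exists_add_mem_invtSubmodule {K V : Type*} [DivisionRing K] [AddCommGroup V]
    [Module K V] {A : Module.End K V} {W U : Submodule K V} (h : W.map A ≤ W ⊔ U) :
    ∃ D : Module.End K V, range D ≤ U ∧ W ∈ (A + D).invtSubmodule := by
  obtain ⟨φ, hφ⟩ : ∃ φ : W →ₗ[K] W × U, W.subtype.coprod U.subtype ∘ₗ φ = A ∘ₗ W.subtype :=
    exists_comp_eq_of_range_le (by simpa [range_coprod, range_comp] using h)
  obtain ⟨D, hD⟩ := exists_extend (-(snd K W U ∘ₗ φ))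
  refine ⟨U.subtype ∘ₗ D, by simpa [range_comp] using map_subtype_le U _, fun w hw => ?_⟩
  have hAw : ((φ ⟨w, hw⟩).1 : V) + (φ ⟨w, hw⟩).2 = A w := congr($hφ ⟨w, hw⟩)
  have hDw : D w = -(φ ⟨w, hw⟩).2 := congr($hD ⟨w, hw⟩)
  have hADw : (A + U.subtype ∘ₗ D) w = (φ ⟨w, hw⟩).1 := by simp [hDw, ← hAw]
  rw [mem_comap, hADw]
  exact (φ ⟨w, hw⟩).1.2

section Factorization

variable {K E V F Y : Type*} [DivisionRing K] [AddCommGroup E] [Module K E]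
  [AddCommGroup V] [Module K V] [AddCommGroup F] [Module K F] [AddCommGroup Y] [Module K Y]
  {P : E →ₗ[K] V} {Q : V →ₗ[K] F} {R : E →ₗ[K] F} {C : V →ₗ[K] Y}

theorem ker_le_range_of_forall_unobservableSubspace_eq_bot {A₀ : Module.End K V}
    (hA₀ : R = Q ∘ₗ A₀ ∘ₗ P)
    (hobs : ∀ A : Module.End K V, R = Q ∘ₗ A ∘ₗ P → unobservableSubspace C A = ⊥) :
    ker C ≤ range P := by
  intro x hCx
  by_contra hxP
  obtain ⟨A, hAP, hAx⟩ := exists_extend_of_notMem (A₀ ∘ₗ (range P).subtype) hxP 0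
  have hA : A ∘ₗ P = A₀ ∘ₗ P := by
    ext u
    exact congr($hAP ⟨P u, mem_range_self P u⟩)
  have hx : x ∈ unobservableSubspace C A := by
    refine mem_unobservableSubspace.mpr fun t => ?_
    cases t with
    | zero => simpa using hCx
    | succ t => simp [pow_succ, hAx]
  rw [hobs A (by rw [hA, hA₀]), mem_bot] at hx
  exact hxP (hx ▸ zero_mem _)

theorem le_ker_of_forall_unobservableSubspace_eq_bot {A₀ : Module.End K V}
    (hA₀ : R = Q ∘ₗ A₀ ∘ₗ P)
    (hobs : ∀ A : Module.End K V, R = Q ∘ₗ A ∘ₗ P → unobservableSubspace C A = ⊥)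
    {L : Submodule K E} (hLR : L.map R ≤ L.map (Q ∘ₗ P)) (hLC : L.map (C ∘ₗ P) = ⊥) :
    L ≤ ker P := by
  have hPL : (L.map P).map A₀ ≤ L.map P ⊔ ker Q := by
    rintro _ ⟨_, ⟨u, hu, rfl⟩, rfl⟩
    obtain ⟨u', hu', hQPu'⟩ := hLR ⟨u, hu, rfl⟩
    refine mem_sup.mpr ⟨P u', ⟨u', hu', rfl⟩, A₀ (P u) - P u', ?_, add_sub_cancel _ _⟩
    rw [mem_ker, map_sub, sub_eq_zero]
    simpa [hA₀] using hQPu'.symm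
  obtain ⟨D, hDQ, hD⟩ := Module.End.exists_add_mem_invtSubmodule hPL
  have hA : R = Q ∘ₗ (A₀ + D) ∘ₗ P := by
    rw [add_comp, comp_add, ← comp_assoc P D Q, range_le_ker_iff.mp hDQ, zero_comp, add_zero,
      hA₀]
  rw [le_ker_iff_map, ← le_bot_iff, ← hobs _ hA]
  exact le_unobservableSubspace hD (by rwa [le_ker_iff_map, ← map_comp])

theorem unobservableSubspace_eq_bot_of_ker_le_range {A : Module.End K V}
    (hA : R = Q ∘ₗ A ∘ₗ P) (hCP : ker C ≤ range P) {Lstar : Submodule K E}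
    (hLmax : ∀ L : Submodule K E, L.map R ≤ L.map (Q ∘ₗ P) → L.map (C ∘ₗ P) = ⊥ → L ≤ Lstar)
    (hLP : Lstar ≤ ker P) :
    unobservableSubspace C A = ⊥ := by
  set N := unobservableSubspace C A
  have hNP : N ≤ range P := unobservableSubspace_le_ker.trans hCP
  have hNL : N.comap P ≤ Lstar := by
    refine hLmax _ ?_ ?_
    · rintro _ ⟨u, hu, rfl⟩
      have hAPu : A (P u) ∈ N := unobservableSubspace_mem_invtSubmodule hu
      obtain ⟨w, hw⟩ := hNP hAPu
      exact ⟨w, show P w ∈ N from hw ▸ hAPu, by simp [hA, hw]⟩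
    · rw [← le_ker_iff_map, ker_comp]
      exact comap_mono unobservableSubspace_le_ker
  rw [eq_bot_iff]
  calc N = (N.comap P).map P := by rw [map_comap_eq, inf_eq_right.mpr hNP]
    _ ≤ Lstar.map P := map_mono hNL
    _ = ⊥ := le_ker_iff_map.mp hLP

theorem forall_unobservableSubspace_eq_bot_iff (hne : ∃ A₀ : Module.End K V, R = Q ∘ₗ A₀ ∘ₗ P)
    {Lstar : Submodule K E} (hLR : Lstar.map R ≤ Lstar.map (Q ∘ₗ P))
    (hLC : Lstar.map (C ∘ₗ P) = ⊥)
    (hLmax : ∀ L : Submodule K E, L.map R ≤ L.map (Q ∘ₗ P) → L.map (C ∘ₗ P) = ⊥ → L ≤ Lstar) :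
    (∀ A : Module.End K V, R = Q ∘ₗ A ∘ₗ P → unobservableSubspace C A = ⊥) ↔
      ker C ≤ range P ∧ Lstar ≤ ker P := by
  obtain ⟨A₀, hA₀⟩ := hne
  refine ⟨fun hobs => ⟨?_, ?_⟩, fun ⟨hCP, hLP⟩ A hA => ?_⟩
  · exact ker_le_range_of_forall_unobservableSubspace_eq_bot hA₀ hobs
  · exact le_ker_of_forall_unobservableSubspace_eq_bot hA₀ hobs hLR hLC
  · exact unobservableSubspace_eq_bot_of_ker_le_range hA hCP hLmax hLP

end Factorization

theorem Matrix.forall_observable_iff_unobservableSubspace_eq_bot {K ι κ μ ν : Type*} [Field K]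
    [Fintype ι] [DecidableEq ι] [Fintype κ] [Fintype μ] (P : Matrix ι κ K) (Q : Matrix μ ι K)
    (R : Matrix μ κ K) (C : Matrix ν ι K) :
    (∀ A : Matrix ι ι K, R = Q * A * P →
        ∀ x₀ : ι → K, (∀ t : ℕ, C.mulVec ((A ^ t).mulVec x₀) = 0) → x₀ = 0) ↔
      ∀ A : Module.End K (ι → K), R.mulVecLin = Q.mulVecLin ∘ₗ A ∘ₗ P.mulVecLin →
        unobservableSubspace C.mulVecLin A = ⊥ := by
  rw [← (Matrix.toLin' : Matrix ι ι K ≃ₗ[K] _).toEquiv.forall_congr_right]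
  refine forall_congr' fun A => imp_congr ?_ ?_
  · rw [LinearEquiv.coe_toEquiv, toLin'_apply', ← mulVecLin_mul, ← mulVecLin_mul,
      ← Matrix.mul_assoc]
    simp only [LinearMap.ext_iff, mulVecLin_apply, ← ext_iff_mulVec]
  · simp only [LinearEquiv.coe_toEquiv, Submodule.eq_bot_iff, mem_unobservableSubspace,
      ← toLin'_pow, toLin'_apply, mulVecLin_apply]

/-- geometric characterization of observability of (C,A) for all A ∈ 𝒜. -/
theorem observable_all_iff_geometric (n r l p : ℕ)
    (P : Matrix (Fin n) (Fin r) ℝ) (Q : Matrix (Fin l) (Fin n) ℝ)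
    (R : Matrix (Fin l) (Fin r) ℝ) (C : Matrix (Fin p) (Fin n) ℝ)
    (hne : ∃ A : Matrix (Fin n) (Fin n) ℝ, R = Q * A * P)
    (Lstar : Submodule ℝ (Fin r → ℝ))
    (hL1 : Submodule.map R.mulVecLin Lstar ≤ Submodule.map (Q * P).mulVecLin Lstar)
    (hL2 : Submodule.map (C * P).mulVecLin Lstar = ⊥)
    (hLmax : ∀ L : Submodule ℝ (Fin r → ℝ),
      Submodule.map R.mulVecLin L ≤ Submodule.map (Q * P).mulVecLin L →
      Submodule.map (C * P).mulVecLin L = ⊥ → L ≤ Lstar) :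
    (∀ A : Matrix (Fin n) (Fin n) ℝ, R = Q * A * P →
        ∀ x₀ : Fin n → ℝ, (∀ t : ℕ, C.mulVec ((A ^ t).mulVec x₀) = 0) → x₀ = 0) ↔
      (LinearMap.ker C.mulVecLin ≤ LinearMap.range P.mulVecLin ∧
        Lstar ≤ LinearMap.ker P.mulVecLin) := by
  have hne' : ∃ A₀ : Module.End ℝ (Fin n → ℝ),
      R.mulVecLin = Q.mulVecLin ∘ₗ A₀ ∘ₗ P.mulVecLin := by
    obtain ⟨A₀, rfl⟩ := hne
    exact ⟨A₀.mulVecLin, by rw [mulVecLin_mul, mulVecLin_mul, comp_assoc]⟩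
  simp only [mulVecLin_mul] at hL1 hL2 hLmax
  rw [Matrix.forall_observable_iff_unobservableSubspace_eq_bot]
  exact forall_unobservableSubspace_eq_bot_iff hne' hL1 hL2 hLmax
end
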